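/- arXiv:1507.01095 — 7 statements merged into one kernel-verified Lean document; each statement's English description precedes it below -/
import Mathlib

section
/- For any [n,k] linear code C over a finite field F_q with q elements, the weight enumerator polynomial satisfies the identity W_C(Z) = sum over all subsets U of {1,...,n} of Z^{n-|U|} (1-Z)^{|U|} q^{k-ρ(U)}, as an identity of polynomials in the variable Z with rational coefficients. -/
open Polynomial Finset Matrix




/-- For any [n,k] linear code `C` over a finite field `F` with `q` elements
(generator matrix `G` of full row rank `k`), the weight enumerator polynomial satisfies
`W_C(Z) = ∑_{U ⊆ [n]} Z^(n-|U|) (1-Z)^|U| q^(k-ρ(U))` as polynomials in `ℚ[Z]`. -/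
theorem stmt_0 (n k q : ℕ) (F : Type) [Field F] [Fintype F] [DecidableEq F]
    (hq : q = Fintype.card F)
    (G : Matrix (Fin k) (Fin n) F) (hG : G.rank = k)
    (C : Submodule F (Fin n → F))
    (hC : ∀ c, c ∈ C ↔ ∃ x : Fin k → F, ∀ j, c j = ∑ i, x i * G i j)
    (A : ℕ → ℕ)
    (hA : ∀ w, A w = Nat.card {c : Fin n → F // c ∈ C ∧ hammingNorm c = w})
    (ρ : Finset (Fin n) → ℕ)
    (hρ : ∀ U : Finset (Fin n),
      ρ U = Matrix.rank (Matrix.of fun (i : Fin k) (j : ↥U) => G i j.1)) :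
    ∑ w ∈ Finset.range (n + 1), (A w : ℚ[X]) * X ^ w =
      ∑ U : Finset (Fin n),
        X ^ (n - U.card) * (1 - X) ^ U.card * (q : ℚ[X]) ^ (k - ρ U) := by
  classical
  set φ : (Fin k → F) →ₗ[F] (Fin n → F) := G.vecMulLinear with hφdef
  have hφ_apply : ∀ (x : Fin k → F) (j : Fin n), φ x j = ∑ i, x i * G i j := by
    intro x j
    simp [hφdef, Matrix.vecMul, dotProduct]
  have hmem : ∀ c, c ∈ C ↔ ∃ x, φ x = c := by
    intro c
    rw [hC]
    constructor
    · rintro ⟨x, hx⟩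
      exact ⟨x, funext fun j => by rw [hφ_apply, ← hx j]⟩
    · rintro ⟨x, rfl⟩
      exact ⟨x, fun j => (hφ_apply x j).symm⟩
  -- injectivity of φ
  have hinj : Function.Injective φ := by
    rw [← LinearMap.ker_eq_bot]
    have h1 : φ = G.transpose.mulVecLin := (Matrix.mulVecLin_transpose G).symm
    have h2 := LinearMap.finrank_range_add_finrank_ker φ
    have h3 : Module.finrank F (LinearMap.range φ) = k := by
      rw [h1]
      show G.transpose.rank = k
      rw [Matrix.rank_transpose, hG]
    rw [Module.finrank_fin_fun, h3] at h2
    have h4 : Module.finrank F (LinearMap.ker φ) = 0 := by omega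
    exact Submodule.finrank_eq_zero.mp h4
  -- the code as a finset
  set S : Finset (Fin n → F) := univ.filter (· ∈ C) with hSdef
  -- key counting lemma
  have key : ∀ U : Finset (Fin n),
      (S.filter (fun c => ∀ j ∈ U, c j = 0)).card = q ^ (k - ρ U) := by
    intro U
    set M : Matrix (Fin k) ↥U F := Matrix.of fun (i : Fin k) (j : ↥U) => G i j.1 with hMdef
    set ψ : (Fin k → F) →ₗ[F] (↥U → F) := M.vecMulLinear with hψdef
    have hψ_apply : ∀ (x : Fin k → F) (j : ↥U), ψ x j = φ x j.1 := by
      intro x j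
      rw [hφ_apply]
      simp [hψdef, Matrix.vecMul, dotProduct, hMdef]
    have hrange : Module.finrank F (LinearMap.range ψ) = ρ U := by
      have h1 : ψ = M.transpose.mulVecLin := (Matrix.mulVecLin_transpose M).symm
      rw [h1]
      show M.transpose.rank = ρ U
      rw [Matrix.rank_transpose, hρ U]
    have h2 := LinearMap.finrank_range_add_finrank_ker ψ
    rw [Module.finrank_fin_fun, hrange] at h2
    have hker : Module.finrank F (LinearMap.ker ψ) = k - ρ U := by omega
    let e : LinearMap.ker ψ → {c : Fin n → F // c ∈ C ∧ ∀ j ∈ U, c j = 0} :=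
      fun x => ⟨φ x.1, (hmem _).mpr ⟨x.1, rfl⟩, fun j hj => by
        have hx0 : ψ x.1 = 0 := x.2
        have := congr_fun hx0 ⟨j, hj⟩
        rwa [hψ_apply] at this⟩
    have he : Function.Bijective e := by
      constructor
      · rintro ⟨x, hx⟩ ⟨y, hy⟩ h
        have hxy : φ x = φ y := congrArg Subtype.val h
        exact Subtype.ext (hinj hxy)
      · rintro ⟨c, hc1, hc2⟩
        obtain ⟨x, rfl⟩ := (hmem c).mp hc1
        refine ⟨⟨x, ?_⟩, rfl⟩
        rw [LinearMap.mem_ker]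
        funext j
        rw [hψ_apply]
        exact hc2 j.1 j.2
    have hcard1 : (S.filter (fun c => ∀ j ∈ U, c j = 0)).card
        = Fintype.card {c : Fin n → F // c ∈ C ∧ ∀ j ∈ U, c j = 0} := by
      rw [Fintype.card_subtype, hSdef, filter_filter]
    rw [hcard1, ← Fintype.card_congr (Equiv.ofBijective e he),
      Module.card_eq_pow_finrank (K := F), hker, hq]
  -- LHS as a sum over codewords
  have hL : ∑ w ∈ Finset.range (n + 1), (A w : ℚ[X]) * X ^ w
      = ∑ c ∈ S, X ^ hammingNorm c := by
    have h1 : ∀ w, (A w : ℚ[X]) = ((S.filter (fun c => hammingNorm c = w)).card : ℚ[X]) := by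
      intro w
      rw [hA w, Nat.card_eq_fintype_card, Fintype.card_subtype, hSdef, filter_filter]
    calc ∑ w ∈ Finset.range (n + 1), (A w : ℚ[X]) * X ^ w
        = ∑ w ∈ Finset.range (n + 1), ∑ c ∈ S.filter (fun c => hammingNorm c = w), X ^ w := by
          refine Finset.sum_congr rfl fun w _ => ?_
          rw [h1, Finset.sum_const, nsmul_eq_mul]
      _ = ∑ w ∈ Finset.range (n + 1),
            ∑ c ∈ S.filter (fun c => hammingNorm c = w), X ^ hammingNorm c := by
          refine Finset.sum_congr rfl fun w _ => Finset.sum_congr rfl fun c hc => ?_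
          rw [(Finset.mem_filter.mp hc).2]
      _ = ∑ c ∈ S, X ^ hammingNorm c :=
          Finset.sum_fiberwise_of_maps_to
            (fun c _ => Finset.mem_range.mpr
              (Nat.lt_succ_of_le (by simpa using (hammingNorm_le_card_fintype (x := c))))) _
  rw [hL]
  -- RHS manipulation
  have hR : ∀ U : Finset (Fin n),
      X ^ (n - U.card) * (1 - X) ^ U.card * (q : ℚ[X]) ^ (k - ρ U)
        = ∑ c ∈ S, if ∀ j ∈ U, c j = 0 then X ^ (n - U.card) * (1 - X) ^ U.card else 0 := by
    intro U
    rw [← Finset.sum_filter, Finset.sum_const, nsmul_eq_mul, key U, mul_comm]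
    push_cast
    ring
  rw [Finset.sum_congr rfl fun U _ => hR U, Finset.sum_comm]
  refine Finset.sum_congr rfl fun c hc => ?_
  -- for a fixed codeword, sum over subsets
  set T : Finset (Fin n) := univ.filter (fun j => c j = 0) with hTdef
  have hfilt : (univ.filter (fun U : Finset (Fin n) => ∀ j ∈ U, c j = 0)) = T.powerset := by
    ext U
    simp [hTdef, Finset.subset_iff]
  have hT : T.card + hammingNorm c = n := by
    have h := Finset.card_filter_add_card_filter_not
      (s := (univ : Finset (Fin n))) (p := fun j => c j = 0)
    simpa [hammingNorm, hTdef] using h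
  have hbin : (∑ U ∈ T.powerset, (1 - X : ℚ[X]) ^ U.card * X ^ (T.card - U.card)) = 1 := by
    have h := Finset.prod_add (fun _ : Fin n => (1 - X : ℚ[X])) (fun _ => X) T
    simp only [sub_add_cancel, Finset.prod_const, one_pow] at h
    have h2 : (∑ U ∈ T.powerset, (1 - X : ℚ[X]) ^ U.card * X ^ (T.card - U.card))
        = ∑ U ∈ T.powerset, (1 - X : ℚ[X]) ^ U.card * X ^ (T \ U).card := by
      refine Finset.sum_congr rfl fun U hU => ?_
      rw [Finset.card_sdiff_of_subset (Finset.mem_powerset.mp hU)]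
    rw [h2, ← h]
  calc X ^ hammingNorm c
      = X ^ hammingNorm c
          * ∑ U ∈ T.powerset, (1 - X : ℚ[X]) ^ U.card * X ^ (T.card - U.card) := by
        rw [hbin, mul_one]
    _ = ∑ U ∈ T.powerset, X ^ (n - U.card) * (1 - X) ^ U.card := by
        rw [Finset.mul_sum]
        refine Finset.sum_congr rfl fun U hU => ?_
        have hUc : U.card ≤ T.card := Finset.card_le_card (Finset.mem_powerset.mp hU)
        have hn : n - U.card = hammingNorm c + (T.card - U.card) := by omega
        rw [hn, pow_add]
        ring
    _ = ∑ U : Finset (Fin n),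
          if ∀ j ∈ U, c j = 0 then X ^ (n - U.card) * (1 - X) ^ U.card else 0 := by
        rw [← Finset.sum_filter, hfilt]
end

section
/- For any [n,k] linear code C over a finite field F_q with q elements, k ≥ 1, and minimum distance d_min, the weight enumerator polynomial satisfies W_C(Z) = 1 + sum over all subsets U of {1,...,n} with |U| ≤ n - d_min of Z^{n-|U|} (1-Z)^{|U|} (q^{k-ρ(U)} - 1), as an identity of polynomials in the variable Z with rational coefficients. -/
open Polynomial Finset Matrix

/-! For a word `c` with zero set `Z`, the binomial theorem gives
`X ^ wt c = X ^ (n - |Z|) (X + (1 - X)) ^ |Z| = ∑_{U ⊆ Z} X ^ (n - |U|) (1 - X) ^ |U|`.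
Summing over the code and exchanging the sums, the coefficient of `X ^ (n - |U|) (1 - X) ^ |U|`
is the number of codewords vanishing on `U`, i.e. the size `q ^ (k - ρ U)` of the kernel of the
message map restricted to the coordinates in `U`. Splitting each count as `1 + (count - 1)`, the
ones sum to `∑_U X ^ (n - |U|) (1 - X) ^ |U| = 1`, and if `|U| > n - d_min` the zero word is the
only codeword vanishing on `U`, so those terms drop out. -/

section Binomial

variable {R α : Type*} [CommRing R]

theorem sum_powerset_pow_sub_card_mul_one_sub_pow_card (x : R) {n : ℕ} (s : Finset α)
    (hs : #s ≤ n) :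
    ∑ U ∈ s.powerset, x ^ (n - #U) * (1 - x) ^ #U = x ^ (n - #s) := by
  rw [sum_powerset_apply_card (fun m => x ^ (n - m) * (1 - x) ^ m)]
  calc ∑ j ∈ range (#s + 1), (#s).choose j • (x ^ (n - j) * (1 - x) ^ j)
      = x ^ (n - #s) * ∑ j ∈ range (#s + 1), (1 - x) ^ j * x ^ (#s - j) * (#s).choose j := by
        rw [mul_sum]
        refine sum_congr rfl fun j hj => ?_
        rw [mem_range] at hj
        rw [show n - j = (n - #s) + (#s - j) by omega, pow_add, nsmul_eq_mul]
        ring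
    _ = x ^ (n - #s) := by rw [← add_pow]; simp

theorem sum_pow_card_compl_mul_one_sub_pow_card [Fintype α] (x : R) :
    ∑ U : Finset α, x ^ (Fintype.card α - #U) * (1 - x) ^ #U = 1 := by
  rw [← powerset_univ, ← card_univ,
    sum_powerset_pow_sub_card_mul_one_sub_pow_card x univ le_rfl, Nat.sub_self, pow_zero]

end Binomial

section Hamming

variable {R ι β : Type*} [CommRing R] [Fintype ι] [Zero β] [DecidableEq β]

theorem card_filter_eq_zero_eq_card_sub_hammingNorm (c : ι → β) :
    #{i | c i = 0} = Fintype.card ι - hammingNorm c := by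
  have := card_filter_add_card_filter_not (s := univ) (fun i => c i = 0)
  rw [card_univ] at this
  unfold hammingNorm
  simp only [ne_eq] at this ⊢
  omega

theorem hammingNorm_le_card_sub_card_of_forall_eq_zero {c : ι → β} {U : Finset ι}
    (hc : ∀ j ∈ U, c j = 0) : hammingNorm c ≤ Fintype.card ι - #U := by
  classical
  refine (card_le_card fun i hi => ?_).trans_eq (card_compl U)
  exact mem_compl.mpr fun hiU => (mem_filter.mp hi).2 (hc i hiU)

theorem eq_zero_of_forall_eq_zero_of_card_sub_lt {C : Set (ι → β)} {d : ℕ}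
    (hd : ∀ c ∈ C, c ≠ 0 → d ≤ hammingNorm c) {c : ι → β} (hcC : c ∈ C) {U : Finset ι}
    (hU : Fintype.card ι - d < #U) (hc : ∀ j ∈ U, c j = 0) : c = 0 := by
  by_contra hc0
  have := hd c hcC hc0
  have := hammingNorm_le_card_sub_card_of_forall_eq_zero hc
  have := card_le_univ U
  omega

theorem pow_hammingNorm_eq_sum (x : R) (c : ι → β) :
    x ^ hammingNorm c =
      ∑ U with ∀ j ∈ U, c j = 0, x ^ (Fintype.card ι - #U) * (1 - x) ^ #U := by
  have hzeros :
      ({U | ∀ j ∈ U, c j = 0} : Finset (Finset ι)) = ({i | c i = 0} : Finset ι).powerset := by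
    ext U
    simp [subset_iff]
  rw [hzeros, sum_powerset_pow_sub_card_mul_one_sub_pow_card,
    card_filter_eq_zero_eq_card_sub_hammingNorm, Nat.sub_sub_self hammingNorm_le_card_fintype]
  exact card_le_univ _

theorem sum_pow_hammingNorm_eq_sum_card_forall_eq_zero (x : R) (S : Finset (ι → β)) :
    ∑ c ∈ S, x ^ hammingNorm c =
      ∑ U : Finset ι, (#{c ∈ S | ∀ j ∈ U, c j = 0} : R) *
        (x ^ (Fintype.card ι - #U) * (1 - x) ^ #U) := by
  rw [sum_congr rfl fun (c : ι → β) _ => pow_hammingNorm_eq_sum x c]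
  simp_rw [sum_filter]
  rw [sum_comm]
  refine sum_congr rfl fun U _ => ?_
  rw [← sum_filter, sum_const, nsmul_eq_mul]

theorem sum_card_filter_hammingNorm_mul_pow (x : R) (S : Finset (ι → β)) :
    ∑ w ∈ range (Fintype.card ι + 1), (#{c ∈ S | hammingNorm c = w} : R) * x ^ w =
      ∑ c ∈ S, x ^ hammingNorm c := by
  rw [← sum_fiberwise_of_maps_to (t := range (Fintype.card ι + 1))
    fun c _ => mem_range.mpr (Nat.lt_succ_of_le (hammingNorm_le_card_fintype (x := c)))]
  refine sum_congr rfl fun w _ => ?_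
  rw [sum_congr rfl fun c hc => by rw [(mem_filter.mp hc).2], sum_const, nsmul_eq_mul]

theorem sum_natCard_hammingNorm_mul_pow_eq_one_add [Finite β] (x : R) {C : Set (ι → β)}
    (hC : 0 ∈ C) {d : ℕ} (hd : ∀ c ∈ C, c ≠ 0 → d ≤ hammingNorm c) :
    ∑ w ∈ range (Fintype.card ι + 1), (Nat.card {c // c ∈ C ∧ hammingNorm c = w} : R) * x ^ w =
      1 + ∑ U with #U ≤ Fintype.card ι - d, x ^ (Fintype.card ι - #U) * (1 - x) ^ #U *
        ((Nat.card {c // c ∈ C ∧ ∀ j ∈ U, c j = 0} : R) - 1) := by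
  set S : Finset (ι → β) := C.toFinite.toFinset
  have hcard (P : (ι → β) → Prop) [DecidablePred P] :
      Nat.card {c // c ∈ C ∧ P c} = #{c ∈ S | P c} := by
    rw [← Nat.card_eq_finsetCard]
    exact Nat.card_congr (Equiv.subtypeEquivRight fun c => by simp [S])
  have hzero (U : Finset ι) (hU : Fintype.card ι - d < #U) :
      #{c ∈ S | ∀ j ∈ U, c j = 0} = 1 := by
    refine card_eq_one.mpr ⟨0, eq_singleton_iff_unique_mem.mpr ⟨?_, fun c hc => ?_⟩⟩
    · simpa [S] using hC
    · rw [mem_filter, Set.Finite.mem_toFinset] at hc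
      exact eq_zero_of_forall_eq_zero_of_card_sub_lt hd hc.1 hU hc.2
  simp only [hcard]
  rw [sum_card_filter_hammingNorm_mul_pow, sum_pow_hammingNorm_eq_sum_card_forall_eq_zero]
  calc ∑ U : Finset ι,
        (#{c ∈ S | ∀ j ∈ U, c j = 0} : R) * (x ^ (Fintype.card ι - #U) * (1 - x) ^ #U)
      = ∑ U : Finset ι, x ^ (Fintype.card ι - #U) * (1 - x) ^ #U +
          ∑ U : Finset ι, x ^ (Fintype.card ι - #U) * (1 - x) ^ #U *
            ((#{c ∈ S | ∀ j ∈ U, c j = 0} : R) - 1) := by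
        rw [← sum_add_distrib]
        exact sum_congr rfl fun U _ => by ring
    _ = _ := by
        rw [sum_pow_card_compl_mul_one_sub_pow_card, sum_filter_of_ne fun U _ hne => ?_]
        by_contra hU
        rw [hzero U (not_le.mp hU)] at hne
        simp at hne

end Hamming

section Rank

variable {F m ι : Type*} [Field F] [Fintype m] [Fintype ι]

theorem Matrix.finrank_ker_vecMulLinear (M : Matrix m ι F) :
    Module.finrank F (LinearMap.ker M.vecMulLinear) = Fintype.card m - M.rank := by
  have := LinearMap.finrank_range_add_finrank_ker M.vecMulLinear
  rw [range_vecMulLinear, ← rank_eq_finrank_span_row, Module.finrank_fintype_fun_eq_card] at this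
  omega

theorem Matrix.vecMul_injective_of_rank_eq {M : Matrix m ι F} (hM : M.rank = Fintype.card m) :
    Function.Injective M.vecMul :=
  vecMul_injective_iff.mpr <| linearIndependent_iff_card_eq_finrank_span.mpr <|
    hM ▸ rank_eq_finrank_span_row M

theorem Matrix.natCard_range_vecMulLinear_forall_eq_zero [Finite F] {G : Matrix m ι F}
    (hG : G.rank = Fintype.card m) (U : Finset ι) :
    Nat.card {c // c ∈ LinearMap.range G.vecMulLinear ∧ ∀ j ∈ U, c j = 0} =
      Nat.card F ^ (Fintype.card m - (G.submatrix id ((↑) : U → ι)).rank) := by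
  rw [← finrank_ker_vecMulLinear, ← Module.natCard_eq_pow_finrank]
  refine (Nat.card_eq_of_bijective (fun x => ⟨x.1 ᵥ* G, ⟨x.1, rfl⟩,
    fun j hj => congrFun (LinearMap.mem_ker.mp x.2) ⟨j, hj⟩⟩) ⟨?_, ?_⟩).symm
  · intro x y hxy
    exact Subtype.ext (vecMul_injective_of_rank_eq hG (congrArg Subtype.val hxy))
  · rintro ⟨_, ⟨x, rfl⟩, hx⟩
    exact ⟨⟨x, LinearMap.mem_ker.mpr (funext fun j => hx j.1 j.2)⟩, rfl⟩

end Rank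

theorem stmt_1_general (n k q : ℕ) (F : Type) [Field F] [Fintype F] [DecidableEq F]
    (hq : q = Fintype.card F)
    (G : Matrix (Fin k) (Fin n) F) (hG : G.rank = k)
    (C : Submodule F (Fin n → F))
    (hC : ∀ c, c ∈ C ↔ ∃ x : Fin k → F, ∀ j, c j = ∑ i, x i * G i j)
    (A : ℕ → ℕ)
    (hA : ∀ w, A w = Nat.card {c : Fin n → F // c ∈ C ∧ hammingNorm c = w})
    (ρ : Finset (Fin n) → ℕ)
    (hρ : ∀ U : Finset (Fin n),
      ρ U = Matrix.rank (Matrix.of fun (i : Fin k) (j : ↥U) => G i j.1))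
    (dmin : ℕ)
    (hdmin : IsLeast {w | ∃ c ∈ C, c ≠ 0 ∧ hammingNorm c = w} dmin) :
    ∑ w ∈ Finset.range (n + 1), (A w : ℚ[X]) * X ^ w =
      1 + ∑ U ∈ Finset.univ.filter (fun U : Finset (Fin n) => U.card ≤ n - dmin),
        X ^ (n - U.card) * (1 - X) ^ U.card * ((q : ℚ[X]) ^ (k - ρ U) - 1) := by
  obtain rfl : C = LinearMap.range G.vecMulLinear := by
    ext c
    rw [hC, LinearMap.mem_range]
    simp only [vecMulLinear_apply, funext_iff, vecMul, dotProduct]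
    exact exists_congr fun x => forall_congr' fun j => eq_comm
  have hvanish (U : Finset (Fin n)) :
      Nat.card {c // c ∈ LinearMap.range G.vecMulLinear ∧ ∀ j ∈ U, c j = 0} = q ^ (k - ρ U) := by
    rw [natCard_range_vecMulLinear_forall_eq_zero (by simpa using hG), hρ, hq,
      Nat.card_eq_fintype_card, Fintype.card_fin]
    rfl
  have key := sum_natCard_hammingNorm_mul_pow_eq_one_add (X : ℚ[X]) (zero_mem _)
    fun c hc h0 => hdmin.2 ⟨c, hc, h0, rfl⟩
  simp only [Fintype.card_fin, SetLike.mem_coe, ← hA, hvanish] at key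
  push_cast at key
  exact key

/-- For any [n,k] linear code `C` (k ≥ 1) over a finite field with `q` elements and
minimum distance `dmin`, the weight enumerator polynomial satisfies
`W_C(Z) = 1 + ∑_{U ⊆ [n], |U| ≤ n - dmin} Z^(n-|U|) (1-Z)^|U| (q^(k-ρ(U)) - 1)` in `ℚ[Z]`. -/
theorem stmt_1 (n k q : ℕ) (F : Type) [Field F] [Fintype F] [DecidableEq F]
    (hq : q = Fintype.card F) (hk : 1 ≤ k)
    (G : Matrix (Fin k) (Fin n) F) (hG : G.rank = k)
    (C : Submodule F (Fin n → F))
    (hC : ∀ c, c ∈ C ↔ ∃ x : Fin k → F, ∀ j, c j = ∑ i, x i * G i j)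
    (A : ℕ → ℕ)
    (hA : ∀ w, A w = Nat.card {c : Fin n → F // c ∈ C ∧ hammingNorm c = w})
    (ρ : Finset (Fin n) → ℕ)
    (hρ : ∀ U : Finset (Fin n),
      ρ U = Matrix.rank (Matrix.of fun (i : Fin k) (j : ↥U) => G i j.1))
    (dmin : ℕ)
    (hdmin : IsLeast {w | ∃ c ∈ C, c ≠ 0 ∧ hammingNorm c = w} dmin) :
    ∑ w ∈ Finset.range (n + 1), (A w : ℚ[X]) * X ^ w =
      1 + ∑ U ∈ Finset.univ.filter (fun U : Finset (Fin n) => U.card ≤ n - dmin),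
        X ^ (n - U.card) * (1 - X) ^ U.card * ((q : ℚ[X]) ^ (k - ρ U) - 1) :=
  stmt_1_general n k q F hq G hG C hC A hA ρ hρ dmin hdmin
end

section
/- Let C be an [n,k] MDS code over a finite field F_q with q elements, so its minimum distance is d_min = n - k + 1. Then its weight enumerator coefficients are A_0 = 1, A_w = 0 for 1 ≤ w ≤ d_min - 1, and A_w = Σ_{j=0}^{w-d_min} C(n,w) C(w,j) (-1)^j (q^{k+w-n-j} - 1) for d_min ≤ w ≤ n, where C(a,b) denotes the binomial coefficient. -/
/-!
Let `k = dim C`. The codewords vanishing on a set `S` of coordinates form `C ∩ V_S`, where `V_S`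
has codimension `|S|`, so this space has dimension at least `k - |S|`. The MDS property says that
no nonzero codeword vanishes on `k` coordinates; enlarging `S` by `k - |S|` coordinates therefore
kills `C ∩ V_S`, and the dimension is exactly `k - |S|`. So `q ^ (k - n + |T|)` codewords have
support inside `T`; inclusion–exclusion over `T` counts those with support exactly `T`, and summing
over the `C(n, w)` sets of size `w` gives `A_w`. The alternating sum `∑ (-1)^j C(w, j)` vanishes
for `w ≠ 0`, which turns each `q^e` into `q^e - 1` and lets the sum stop where `e` reaches `0`.
-/

open Finset Module

-- Inclusion–exclusion over the elements of `T` missing from `g a`.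
theorem Finset.card_filter_eq_sum_powerset {α ι : Type*} [Fintype α] [DecidableEq α]
    [DecidableEq ι] (p : α → Prop) [DecidablePred p] (g : α → Finset ι) (T : Finset ι) :
    (#{a | p a ∧ g a = T} : ℤ) =
      ∑ t ∈ T.powerset, (-1 : ℤ) ^ #t * #{a | p a ∧ g a ⊆ T \ t} := by
  have hincl := inclusion_exclusion_sum_inf_compl T (fun i ↦ ({a | i ∉ g a} : Finset α))
    (fun a ↦ if p a ∧ g a ⊆ T then (1 : ℤ) else 0)
  simp only [sum_boole, smul_eq_mul] at hincl
  have hlhs : ({a | p a ∧ g a = T} : Finset α) =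
      {a ∈ T.inf fun i ↦ ({a | i ∉ g a} : Finset α)ᶜ | p a ∧ g a ⊆ T} := by
    ext a
    simp only [mem_filter, mem_univ, true_and, mem_inf, mem_compl, not_not]
    exact ⟨fun ⟨hp, hg⟩ ↦ ⟨fun i hi ↦ hg ▸ hi, hp, hg.le⟩,
      fun ⟨hT, hp, hgT⟩ ↦ ⟨hp, subset_antisymm hgT hT⟩⟩
  rw [hlhs, hincl]
  refine sum_congr rfl fun t _ ↦ ?_
  congr 3
  ext a
  simp only [mem_filter, mem_univ, true_and, mem_inf, subset_sdiff, disjoint_right]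
  tauto

variable {F ι : Type*} [Field F]

def hammingSupport {M : Type*} [Fintype ι] [Zero M] [DecidableEq M] (c : ι → M) : Finset ι :=
  {i | c i ≠ 0}

theorem hammingSupport_subset_iff {M : Type*} [Fintype ι] [Zero M] [DecidableEq M]
    {c : ι → M} {T : Finset ι} : hammingSupport c ⊆ T ↔ ∀ i ∉ T, c i = 0 := by
  simp only [hammingSupport, subset_iff, mem_filter, mem_univ, true_and]
  exact forall_congr' fun i ↦ not_imp_comm

variable (F) in
def vanishingOn (S : Finset ι) : Submodule F (ι → F) :=
  LinearMap.ker (LinearMap.funLeft F F ((↑) : S → ι))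

theorem mem_vanishingOn {S : Finset ι} {x : ι → F} :
    x ∈ vanishingOn F S ↔ ∀ i ∈ S, x i = 0 := by
  simp [vanishingOn, funext_iff, LinearMap.funLeft_apply]

theorem mem_vanishingOn_compl [Fintype ι] [DecidableEq ι] [DecidableEq F] {T : Finset ι}
    {x : ι → F} : x ∈ vanishingOn F Tᶜ ↔ hammingSupport x ⊆ T := by
  simp only [mem_vanishingOn, mem_compl, hammingSupport_subset_iff]

theorem vanishingOn_union [DecidableEq ι] (S T : Finset ι) :
    vanishingOn F S ⊓ vanishingOn F T = vanishingOn F (S ∪ T) := by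
  ext x
  simp only [Submodule.mem_inf, mem_vanishingOn, mem_union]
  grind

theorem finrank_vanishingOn [Fintype ι] (S : Finset ι) :
    finrank F (vanishingOn F S) = Fintype.card ι - #S := by
  have := LinearMap.finrank_range_add_finrank_ker (LinearMap.funLeft F F ((↑) : S → ι))
  rw [LinearMap.range_eq_top.2 (LinearMap.funLeft_surjective_of_injective _ _ _
    Subtype.val_injective), finrank_top, finrank_pi, finrank_pi, Fintype.card_coe] at this
  rw [vanishingOn]
  omega

theorem finrank_sub_card_le_finrank_inf_vanishingOn [Fintype ι] (U : Submodule F (ι → F))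
    (S : Finset ι) : finrank F U - #S ≤ finrank F ↥(U ⊓ vanishingOn F S) := by
  have hsum := Submodule.finrank_sup_add_finrank_inf_eq U (vanishingOn F S)
  have hsup := (U ⊔ vanishingOn F S).finrank_le
  rw [finrank_vanishingOn] at hsum
  rw [finrank_pi] at hsup
  have := card_le_univ S
  omega

namespace Submodule

variable [Fintype ι] [DecidableEq F]

-- The Singleton bound `d ≤ n - k + 1` holds with equality; written without truncated subtraction.
def IsMDS (C : Submodule F (ι → F)) : Prop :=
  ∀ c ∈ C, c ≠ 0 → Fintype.card ι < finrank F C + hammingNorm c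

variable {C : Submodule F (ι → F)}

theorem IsMDS.inf_vanishingOn_eq_bot (hC : C.IsMDS) {S : Finset ι} (hS : finrank F C ≤ #S) :
    C ⊓ vanishingOn F S = ⊥ := by
  classical
  refine (Submodule.eq_bot_iff _).2 fun c hc ↦ by_contra fun hc0 ↦ ?_
  obtain ⟨hcC, hcS⟩ := mem_inf.1 hc
  have hwt : hammingNorm c ≤ #Sᶜ := card_le_card fun i hi ↦
    mem_compl.2 fun hiS ↦ (mem_filter.1 hi).2 (mem_vanishingOn.1 hcS i hiS)
  have := hC c hcC hc0
  rw [card_compl] at hwt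
  have := card_le_univ S
  omega

theorem IsMDS.finrank_inf_vanishingOn [DecidableEq ι] (hC : C.IsMDS) (S : Finset ι) :
    finrank F ↥(C ⊓ vanishingOn F S) = finrank F C - #S := by
  refine le_antisymm ?_ (finrank_sub_card_le_finrank_inf_vanishingOn C S)
  rcases le_total (finrank F C) #S with hS | hS
  · rw [hC.inf_vanishingOn_eq_bot hS, finrank_bot]
    exact Nat.zero_le _
  obtain ⟨S', hSS', hS'⟩ := exists_superset_card_eq hS (C.finrank_le.trans_eq (finrank_pi F))
  have key := finrank_sub_card_le_finrank_inf_vanishingOn (C ⊓ vanishingOn F S) (S' \ S)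
  rw [inf_assoc, vanishingOn_union, union_sdiff_of_subset hSS',
    hC.inf_vanishingOn_eq_bot hS'.ge, finrank_bot, card_sdiff_of_subset hSS'] at key
  omega

theorem IsMDS.card_hammingSupport_subset [DecidableEq ι] [Fintype F] [DecidablePred (· ∈ C)]
    (hC : C.IsMDS) (T : Finset ι) :
    #{c | c ∈ C ∧ hammingSupport c ⊆ T} = Fintype.card F ^ (finrank F C - #Tᶜ) := by
  rw [← hC.finrank_inf_vanishingOn, ← Nat.card_eq_fintype_card, ← natCard_eq_pow_finrank,
    ← Nat.card_eq_finsetCard]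
  refine Nat.card_congr (Equiv.subtypeEquivRight fun c ↦ ?_)
  simp only [mem_filter, mem_univ, true_and, mem_inf, mem_vanishingOn_compl]

theorem IsMDS.card_hammingSupport_eq [DecidableEq ι] [Fintype F] [DecidablePred (· ∈ C)]
    (hC : C.IsMDS) (T : Finset ι) :
    (#{c | c ∈ C ∧ hammingSupport c = T} : ℤ) =
      ∑ j ∈ range (#T + 1), ((#T).choose j : ℤ) * (-1) ^ j *
        Fintype.card F ^ (finrank F C + #T - Fintype.card ι - j) := by
  have hsub (t : Finset ι) (ht : t ⊆ T) : #{c | c ∈ C ∧ hammingSupport c ⊆ T \ t} =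
      Fintype.card F ^ (finrank F C + #T - Fintype.card ι - #t) := by
    rw [hC.card_hammingSupport_subset, card_compl, card_sdiff_of_subset ht]
    have := card_le_univ T
    have := card_le_card ht
    congr 1
    omega
  rw [card_filter_eq_sum_powerset, sum_congr rfl fun t ht ↦ by rw [hsub t (mem_powerset.1 ht)]]
  push_cast
  rw [sum_powerset_apply_card (fun j ↦ (-1 : ℤ) ^ j *
    (Fintype.card F : ℤ) ^ (finrank F C + #T - Fintype.card ι - j))]
  simp only [nsmul_eq_mul, mul_assoc]

theorem IsMDS.card_hammingNorm_eq [DecidableEq ι] [Fintype F] [DecidablePred (· ∈ C)]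
    (hC : C.IsMDS) (w : ℕ) :
    (#{c | c ∈ C ∧ hammingNorm c = w} : ℤ) = (Fintype.card ι).choose w * ∑ j ∈ range (w + 1),
      (w.choose j : ℤ) * (-1) ^ j * Fintype.card F ^ (finrank F C + w - Fintype.card ι - j) := by
  have hfiber : #{c | c ∈ C ∧ hammingNorm c = w} =
      ∑ T ∈ powersetCard w univ, #{c | c ∈ C ∧ hammingSupport c = T} := by
    refine (card_eq_sum_card_fiberwise (f := hammingSupport) fun c hc ↦ ?_).trans
      (sum_congr rfl fun T hT ↦ ?_)
    · exact mem_powersetCard.2 ⟨subset_univ _, (mem_filter.1 hc).2.2⟩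
    · congr 1
      ext c
      simp only [mem_filter, mem_univ, true_and, and_assoc]
      exact and_congr_right fun _ ↦
        ⟨And.right, fun h ↦ ⟨(congrArg card h).trans (mem_powersetCard.1 hT).2, h⟩⟩
  rw [hfiber]
  push_cast
  rw [sum_congr rfl fun T hT ↦ by rw [hC.card_hammingSupport_eq, (mem_powersetCard.1 hT).2],
    sum_const, card_powersetCard, card_univ, nsmul_eq_mul]

end Submodule

theorem sum_range_choose_mul_neg_one_pow_mul_pow {w m : ℕ} (hw : w ≠ 0) (hm : m ≤ w + 1)
    (x : ℤ) : ∑ j ∈ range (w + 1), (w.choose j : ℤ) * (-1) ^ j * x ^ (m - j) =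
      ∑ j ∈ range m, (w.choose j : ℤ) * (-1) ^ j * (x ^ (m - j) - 1) := by
  have htail : ∑ j ∈ range m, (w.choose j : ℤ) * (-1) ^ j * (x ^ (m - j) - 1) =
      ∑ j ∈ range (w + 1), (w.choose j : ℤ) * (-1) ^ j * (x ^ (m - j) - 1) :=
    sum_subset (range_subset_range.2 hm) fun j _ hj ↦ by
      rw [Nat.sub_eq_zero_of_le (not_lt.1 (mt mem_range.2 hj)), pow_zero, sub_self, mul_zero]
  rw [htail, ← sub_eq_zero, ← sum_sub_distrib, ← Int.alternating_sum_range_choose_of_ne hw]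
  exact sum_congr rfl fun j _ ↦ by ring

theorem stmt_2_general (n k q : ℕ) (F : Type) [Field F] [Fintype F] [DecidableEq F]
    (hq : q = Fintype.card F) (hkn : k ≤ n)
    (C : Submodule F (Fin n → F)) (hdim : Module.finrank F C = k)
    (hMDS : IsLeast {w | ∃ c ∈ C, c ≠ 0 ∧ hammingNorm c = w} (n - k + 1))
    (A : ℕ → ℕ)
    (hA : ∀ w, A w = Nat.card {c : Fin n → F // c ∈ C ∧ hammingNorm c = w}) :
    A 0 = 1 ∧
    (∀ w, 1 ≤ w → w ≤ n - k → A w = 0) ∧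
    (∀ w, n - k + 1 ≤ w → w ≤ n →
      (A w : ℚ) = ∑ j ∈ Finset.range (w - (n - k + 1) + 1),
        (n.choose w : ℚ) * (w.choose j : ℚ) * (-1 : ℚ) ^ j *
          ((q : ℚ) ^ (k + w - n - j) - 1)) := by
  classical
  have hC : C.IsMDS := fun c hc hc0 ↦ by
    have := hMDS.2 ⟨c, hc, hc0, rfl⟩
    rw [Fintype.card_fin, hdim]
    omega
  replace hA (w : ℕ) : A w = #{c | c ∈ C ∧ hammingNorm c = w} := by
    rw [hA, Nat.card_eq_fintype_card, Fintype.card_subtype]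
  refine ⟨?_, fun w hw1 hw2 ↦ ?_, fun w hw1 hw2 ↦ ?_⟩
  · rw [hA, card_eq_one]
    refine ⟨0, eq_singleton_iff_unique_mem.2 ⟨?_, fun c hc ↦ ?_⟩⟩
    · simp [C.zero_mem]
    · exact hammingNorm_eq_zero.1 (mem_filter.1 hc).2.2
  · rw [hA, card_eq_zero, filter_eq_empty_iff]
    rintro c - ⟨hc, rfl⟩
    have := hC c hc (by rintro rfl; simp at hw1)
    rw [Fintype.card_fin, hdim] at this
    omega
  · have hcount := hC.card_hammingNorm_eq w
    rw [← hA, Fintype.card_fin, hdim, ← hq, sum_range_choose_mul_neg_one_pow_mul_pow (by omega)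
      (by omega), mul_sum] at hcount
    rw [show w - (n - k + 1) + 1 = k + w - n by omega]
    have hcountℚ := congrArg (Int.cast : ℤ → ℚ) hcount
    push_cast at hcountℚ
    exact hcountℚ.trans (sum_congr rfl fun j _ ↦ by ring)

/-- The weight enumerator coefficients of an [n,k] MDS code over a finite field
with `q` elements (minimum distance `d_min = n - k + 1`): `A_0 = 1`, `A_w = 0` for
`1 ≤ w ≤ d_min - 1`, and
`A_w = ∑_{j=0}^{w-d_min} C(n,w) C(w,j) (-1)^j (q^(k+w-n-j) - 1)` for `d_min ≤ w ≤ n`. -/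
theorem stmt_2 (n k q : ℕ) (F : Type) [Field F] [Fintype F] [DecidableEq F]
    (hq : q = Fintype.card F) (hk : 1 ≤ k) (hkn : k ≤ n)
    (C : Submodule F (Fin n → F)) (hdim : Module.finrank F C = k)
    (hMDS : IsLeast {w | ∃ c ∈ C, c ≠ 0 ∧ hammingNorm c = w} (n - k + 1))
    (A : ℕ → ℕ)
    (hA : ∀ w, A w = Nat.card {c : Fin n → F // c ∈ C ∧ hammingNorm c = w}) :
    A 0 = 1 ∧
    (∀ w, 1 ≤ w → w ≤ n - k → A w = 0) ∧
    (∀ w, n - k + 1 ≤ w → w ≤ n →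
      (A w : ℚ) = ∑ j ∈ Finset.range (w - (n - k + 1) + 1),
        (n.choose w : ℚ) * (w.choose j : ℚ) * (-1 : ℚ) ^ j *
          ((q : ℚ) ^ (k + w - n - j) - 1)) :=
  stmt_2_general n k q F hq hkn C hdim hMDS A hA
end

section
/- Let C be a (k,r,h) data-local maximally recoverable code with local group supports S_1, ..., S_{k/r}. Then for any subset I of {1,...,n}, the columns of a generator matrix of C indexed by I are linearly independent (i.e., ρ(I) = |I|) if and only if |I| ≤ k and |I ∩ S_i| ≤ r for all 1 ≤ i ≤ k/r. -/
open Finset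

/-- Coordinate index set of a `(k,r,h)` data-local code with `ℓ = k/r` local groups:
`Sum.inl (i, j)` is the `j`-th message symbol of the `i`-th local group,
`Sum.inr (Sum.inl i)` is the local parity of the `i`-th local group, and
`Sum.inr (Sum.inr t)` is the `t`-th global parity.  Its cardinality is `n = ℓr + ℓ + h`. -/
abbrev DLIdx (ℓ r h : ℕ) : Type := (Fin ℓ × Fin r) ⊕ (Fin ℓ ⊕ Fin h)

/-- The support `S_i` of the `i`-th local group: its `r` message symbols together with its
local parity. -/
def dlGroup (ℓ r h : ℕ) (i : Fin ℓ) : Finset (DLIdx ℓ r h) :=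
  insert (Sum.inr (Sum.inl i))
    ((Finset.univ : Finset (Fin r)).image fun j => Sum.inl (i, j))

/-- `ρ(U)`: the dimension of the projection of the code `C` onto the coordinates in `U`
(equivalently, the rank of the corresponding columns of a generator matrix of `C`). -/
noncomputable def dlRho (ℓ r h : ℕ) (F : Type) [Field F]
    (C : Submodule F (DLIdx ℓ r h → F)) (U : Finset (DLIdx ℓ r h)) : ℕ :=
  Module.finrank F (C.map (LinearMap.funLeft F F (Subtype.val : ↥U → DLIdx ℓ r h)))

/-!
A set `I` of columns is independent iff the projection of `C` onto `I` is surjective.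
If some local group `S_i` lies inside `I`, the local parity relation obstructs surjectivity,
and `|I| ≤ dim C = k` always. Conversely, if `|I ∩ S_i| ≤ r` for all `i`, delete from each
`S_i` one coordinate outside `I`; the result `E` is an admissible puncturing containing `I`.
Pick `I ⊆ J ⊆ E` with `|J| = k`. Deleting the `h` coordinates of `E \ J` from the MDS code
`C|_E` of distance `h + 1` is injective, so `C|_J` has dimension `k = |J|`, i.e. it is all of
`F^J`, and so is its further projection `C|_I`.
-/

section Puncturing

variable {F α : Type} [Field F]

/-- The paper's `C|_U`. -/
def punctured (C : Submodule F (α → F)) (U : Finset α) : Submodule F (↥U → F) :=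
  C.map (LinearMap.funLeft F F (Subtype.val : ↥U → α))

def restrictTo {I J : Finset α} (hIJ : I ⊆ J) : (↥J → F) →ₗ[F] (↥I → F) :=
  LinearMap.funLeft F F (Set.inclusion hIJ)

lemma punctured_eq_map_restrictTo (C : Submodule F (α → F)) {I J : Finset α} (hIJ : I ⊆ J) :
    punctured C I = (punctured C J).map (restrictTo hIJ) := by
  rw [punctured, punctured, restrictTo, ← Submodule.map_comp, ← LinearMap.funLeft_comp]
  rfl

lemma finrank_punctured_eq_card_iff (C : Submodule F (α → F)) (U : Finset α) :
    Module.finrank F (punctured C U) = U.card ↔ punctured C U = ⊤ := by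
  have hfull : Module.finrank F (↥U → F) = U.card := by simp
  refine ⟨fun h => Submodule.eq_top_of_finrank_eq (h.trans hfull.symm), fun h => ?_⟩
  rw [h, finrank_top, hfull]

lemma punctured_eq_top_of_subset (C : Submodule F (α → F)) {I J : Finset α} (hIJ : I ⊆ J)
    (hJ : punctured C J = ⊤) : punctured C I = ⊤ := by
  rw [punctured_eq_map_restrictTo C hIJ, hJ, Submodule.map_top, LinearMap.range_eq_top]
  exact LinearMap.funLeft_surjective_of_injective F F _ (Set.inclusion_injective hIJ)

lemma finrank_le_card_of_comp_injOn {β : Type} [Fintype β] (C : Submodule F (α → F))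
    (f : β → α) (hC : ∀ c ∈ C, ∀ c' ∈ C, c ∘ f = c' ∘ f → c = c') :
    Module.finrank F C ≤ Fintype.card β := by
  have hinj : Function.Injective ((LinearMap.funLeft F F f).comp C.subtype) :=
    fun c c' hcc' => Subtype.ext (hC c c.2 c' c'.2 hcc')
  simpa using LinearMap.finrank_le_finrank_of_injective hinj

lemma punctured_ne_top_of_relation [DecidableEq α] {ι : Type} [Fintype ι]
    (C : Submodule F (α → F)) (p : α) (q : ι → α) (a : ι → F) (hq : ∀ j, q j ≠ p)
    (hrel : ∀ c ∈ C, c p = ∑ j, a j * c (q j)) {I : Finset α} (hp : p ∈ I)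
    (hqI : ∀ j, q j ∈ I) : punctured C I ≠ ⊤ := by
  intro htop
  obtain ⟨c, hcC, hc⟩ : Pi.single ⟨p, hp⟩ 1 ∈ punctured C I := htop ▸ Submodule.mem_top
  have hcp : c p = 1 := by simpa using congrFun hc ⟨p, hp⟩
  have hcq : ∀ j, c (q j) = 0 := fun j => by
    simpa [Pi.single_apply, hq j] using congrFun hc ⟨q j, hqI j⟩
  simpa [hcp, hcq] using hrel c hcC

lemma hammingNorm_le_card_sdiff [DecidableEq α] [DecidableEq F] {I J : Finset α} (hIJ : I ⊆ J)
    (y : ↥J → F)     (hy : restrictTo hIJ y = 0) : hammingNorm y ≤ (J \ I).card := by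
  refine Finset.card_le_card_of_injOn Subtype.val (fun x hx => ?_) Subtype.val_injective.injOn
  simp only [Finset.coe_filter, Finset.mem_univ, true_and, Set.mem_ofPred_eq] at hx
  refine Finset.mem_sdiff.2 ⟨x.2, fun hxI => hx ?_⟩
  exact congrFun hy ⟨x, hxI⟩

lemma finrank_punctured_eq_of_card_sdiff_lt [DecidableEq α] [DecidableEq F]
    (C : Submodule F (α → F)) {I J : Finset α} (hIJ : I ⊆ J)
    (hdist : ∀ y ∈ punctured C J, y ≠ 0 → (J \ I).card < hammingNorm y) :
    Module.finrank F (punctured C I) = Module.finrank F (punctured C J) := by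
  set P := punctured C J
  have hinj : Function.Injective ((restrictTo hIJ).comp P.subtype) := by
    rw [← LinearMap.ker_eq_bot, LinearMap.ker_eq_bot']
    intro y hy
    by_contra hy0
    have := hdist y y.2 (by simpa using hy0)
    have := hammingNorm_le_card_sdiff hIJ (y : ↥J → F) hy
    omega
  rw [punctured_eq_map_restrictTo C hIJ, ← LinearMap.finrank_range_of_inj hinj,
    LinearMap.range_comp, Submodule.range_subtype]

end Puncturing

section LocalGroups

variable {ℓ r h : ℕ}

lemma mem_dlGroup {i : Fin ℓ} {x : DLIdx ℓ r h} :
    x ∈ dlGroup ℓ r h i ↔ x = Sum.inr (Sum.inl i) ∨ ∃ j, x = Sum.inl (i, j) := by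
  simp [dlGroup, eq_comm]

lemma card_dlGroup (i : Fin ℓ) : (dlGroup ℓ r h i).card = r + 1 := by
  rw [dlGroup, Finset.card_insert_of_notMem (by simp),
    Finset.card_image_of_injective _ (fun a b hab => by simpa using hab), Finset.card_univ,
    Fintype.card_fin]

lemma disjoint_dlGroup {i i' : Fin ℓ} (hne : i ≠ i') :
    Disjoint (dlGroup ℓ r h i) (dlGroup ℓ r h i') := by
  rw [Finset.disjoint_left]
  intro x hx hx'
  rw [mem_dlGroup] at hx hx'
  rcases hx with rfl | ⟨j, rfl⟩ <;> rcases hx' with hx' | ⟨j', hx'⟩ <;> simp_all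

lemma dlGroup_subset_of_lt_card_inter {I : Finset (DLIdx ℓ r h)} {i : Fin ℓ}
    (hI : r < (I ∩ dlGroup ℓ r h i).card) : dlGroup ℓ r h i ⊆ I :=
  Finset.inter_eq_right.1 <|
    Finset.eq_of_subset_of_card_le Finset.inter_subset_right (by rw [card_dlGroup]; omega)

/-- Removing from each local group one coordinate outside `I` gives an admissible `E ⊇ I`. -/
lemma exists_admissible_superset (I : Finset (DLIdx ℓ r h))
    (hI : ∀ i, (I ∩ dlGroup ℓ r h i).card ≤ r) :
    ∃ E : Finset (DLIdx ℓ r h), I ⊆ E ∧ E.card = ℓ * r + h ∧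
      ∀ i, (E ∩ dlGroup ℓ r h i).card = r := by
  have hout : ∀ i, ∃ d ∈ dlGroup ℓ r h i, d ∉ I := fun i => by
    obtain ⟨d, hdS, hd⟩ := Finset.exists_mem_notMem_of_card_lt_card
      (s := I ∩ dlGroup ℓ r h i) (t := dlGroup ℓ r h i)
      (by rw [card_dlGroup]; linarith [hI i])
    exact ⟨d, hdS, fun hdI => hd (Finset.mem_inter.2 ⟨hdI, hdS⟩)⟩
  choose d hdS hdI using hout
  have hd_mem : ∀ i j, d j ∈ dlGroup ℓ r h i ↔ j = i := fun i j =>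
    ⟨fun hdj => by_contra fun hne => Finset.disjoint_left.1 (disjoint_dlGroup hne) (hdS j) hdj,
      fun hji => hji ▸ hdS j⟩
  have hd_inj : Function.Injective d := fun i j hij => ((hd_mem i j).1 (hij ▸ hdS i)).symm
  refine ⟨univ \ univ.image d, fun x hx => ?_, ?_, fun i => ?_⟩
  · simp only [Finset.mem_sdiff, Finset.mem_univ, Finset.mem_image, true_and, not_exists]
    exact fun j hj => hdI j (hj ▸ hx)
  · rw [Finset.card_sdiff_of_subset (Finset.subset_univ _),
      Finset.card_image_of_injective _ hd_inj]
    simp only [Finset.card_univ, Fintype.card_sum, Fintype.card_prod, Fintype.card_fin]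
    omega
  · have : (univ \ univ.image d) ∩ dlGroup ℓ r h i = (dlGroup ℓ r h i).erase (d i) := by
      ext x
      simp only [Finset.mem_inter, Finset.mem_sdiff, Finset.mem_univ, Finset.mem_image,
        true_and, not_exists, Finset.mem_erase]
      constructor
      · exact fun ⟨hx, hxS⟩ => ⟨fun hxd => hx i hxd.symm, hxS⟩
      · rintro ⟨hxd, hxS⟩
        exact ⟨fun j hj => hxd (by rw [← hj, (hd_mem i j).1 (hj ▸ hxS)]), hxS⟩
    rw [this, Finset.card_erase_of_mem (hdS i), card_dlGroup, Nat.add_sub_cancel]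

end LocalGroups

theorem stmt_3_general (ℓ r h : ℕ)
    (F : Type) [Field F] [DecidableEq F]
    (C : Submodule F (DLIdx ℓ r h → F))
    -- the first `k = ℓr` coordinates are the message symbols
    (hsys : ∀ x : Fin ℓ × Fin r → F, ∃! c : DLIdx ℓ r h → F,
      c ∈ C ∧ ∀ p, c (Sum.inl p) = x p)
    -- local parities with nonzero coefficients
    (a : Fin ℓ → Fin r → F)
    (hloc : ∀ c ∈ C, ∀ i : Fin ℓ,
      c (Sum.inr (Sum.inl i)) = ∑ j : Fin r, a i j * c (Sum.inl (i, j)))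
    -- maximal recoverability: each admissible puncturing is a [k+h, k, h+1] MDS code
    (hmrc : ∀ E : Finset (DLIdx ℓ r h), E.card = ℓ * r + h →
      (∀ i : Fin ℓ, (E ∩ dlGroup ℓ r h i).card = r) →
      Module.finrank F
          (C.map (LinearMap.funLeft F F (Subtype.val : ↥E → DLIdx ℓ r h))) = ℓ * r ∧
      ∀ y ∈ C.map (LinearMap.funLeft F F (Subtype.val : ↥E → DLIdx ℓ r h)),
        y ≠ 0 → h + 1 ≤ hammingNorm y) :
    ∀ I : Finset (DLIdx ℓ r h),
      dlRho ℓ r h F C I = I.card ↔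
        I.card ≤ ℓ * r ∧ ∀ i : Fin ℓ, (I ∩ dlGroup ℓ r h i).card ≤ r := by
  intro I
  have hdimC : Module.finrank F C ≤ ℓ * r := by
    refine (finrank_le_card_of_comp_injOn C Sum.inl fun c hc c' hc' hcc' => ?_).trans_eq
      (by simp)
    obtain ⟨_, -, huniq⟩ := hsys (c ∘ Sum.inl)
    exact (huniq c ⟨hc, fun _ => rfl⟩).trans
      (huniq c' ⟨hc', fun p => congrFun hcc'.symm p⟩).symm
  constructor
  · intro hrank
    have htop := (finrank_punctured_eq_card_iff C I).1 hrank
    refine ⟨hrank ▸ (Submodule.finrank_map_le _ _).trans hdimC,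
      fun i => not_lt.1 fun hgt => ?_⟩
    have hS := dlGroup_subset_of_lt_card_inter hgt
    exact punctured_ne_top_of_relation C _ _ (a i) (by simp) (hloc · · i)
      (hS (mem_dlGroup.2 (.inl rfl))) (fun j => hS (mem_dlGroup.2 (.inr ⟨j, rfl⟩))) htop
  · rintro ⟨hcard, hgroups⟩
    obtain ⟨E, hIE, hEcard, hEgroups⟩ := exists_admissible_superset I hgroups
    obtain ⟨hEdim, hEdist⟩ := hmrc E hEcard hEgroups
    obtain ⟨J, hIJ, hJE, hJcard⟩ := Finset.exists_subsuperset_card_eq hIE hcard (by omega)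
    have hJdim : Module.finrank F (punctured C J) = J.card := by
      rw [finrank_punctured_eq_of_card_sdiff_lt C hJE fun y hy hy0 => ?_, hJcard]
      · exact hEdim
      · have := hEdist y hy hy0
        rw [Finset.card_sdiff_of_subset hJE]
        omega
    exact (finrank_punctured_eq_card_iff C I).2
      (punctured_eq_top_of_subset C hIJ ((finrank_punctured_eq_card_iff C J).1 hJdim))

/-- for a `(k,r,h)` data-local maximally recoverable code, the columns of a
generator matrix indexed by `I` are linearly independent (`ρ(I) = |I|`) iff `|I| ≤ k` and
`|I ∩ S_i| ≤ r` for every local group `S_i`. -/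
theorem stmt_3 (ℓ r h : ℕ) (hr : 0 < r) (hℓ : 0 < ℓ)
    (F : Type) [Field F] [Fintype F] [DecidableEq F]
    (C : Submodule F (DLIdx ℓ r h → F))
    -- the first `k = ℓr` coordinates are the message symbols
    (hsys : ∀ x : Fin ℓ × Fin r → F, ∃! c : DLIdx ℓ r h → F,
      c ∈ C ∧ ∀ p, c (Sum.inl p) = x p)
    -- local parities with nonzero coefficients
    (a : Fin ℓ → Fin r → F) (ha : ∀ i j, a i j ≠ 0)
    (hloc : ∀ c ∈ C, ∀ i : Fin ℓ,
      c (Sum.inr (Sum.inl i)) = ∑ j : Fin r, a i j * c (Sum.inl (i, j)))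
    -- maximal recoverability: each admissible puncturing is a [k+h, k, h+1] MDS code
    (hmrc : ∀ E : Finset (DLIdx ℓ r h), E.card = ℓ * r + h →
      (∀ i : Fin ℓ, (E ∩ dlGroup ℓ r h i).card = r) →
      Module.finrank F
          (C.map (LinearMap.funLeft F F (Subtype.val : ↥E → DLIdx ℓ r h))) = ℓ * r ∧
      ∀ y ∈ C.map (LinearMap.funLeft F F (Subtype.val : ↥E → DLIdx ℓ r h)),
        y ≠ 0 → h + 1 ≤ hammingNorm y) :
    ∀ I : Finset (DLIdx ℓ r h),
      dlRho ℓ r h F C I = I.card ↔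
        I.card ≤ ℓ * r ∧ ∀ i : Fin ℓ, (I ∩ dlGroup ℓ r h i).card ≤ r :=
  stmt_3_general ℓ r h F C hsys a hloc hmrc
end

section
/- Let C be an [n,k] linear code over a finite field F_q with generalized Hamming weights d_1 < d_2 < ... < d_k. For any 1 ≤ i ≤ k and any subset U of {1,...,n} with |U| ≥ n - d_i + 1, one has ρ(U) ≥ k - (i - 1). -/
/-! If `ρ(U) ≤ k - i`, rank–nullity for the projection of `C` onto the coordinates in `U` gives
an `i`-dimensional subcode vanishing on `U`. Its support lies in the complement of `U`, so
`d_i ≤ n - |U|`, contradicting `|U| ≥ n - d_i + 1`. -/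

section RankNullity

variable {K V W : Type*} [DivisionRing K] [AddCommGroup V] [Module K V] [AddCommGroup W]
  [Module K W]

theorem Submodule.exists_le_finrank_eq {N : Submodule K V} [FiniteDimensional K N] {i : ℕ}
    (hi : i ≤ Module.finrank K N) : ∃ D ≤ N, Module.finrank K D = i := by
  obtain ⟨v, hv⟩ := exists_linearIndependent_of_le_finrank hi
  refine ⟨Submodule.span K (Set.range (N.subtype ∘ v)), ?_, ?_⟩
  · rw [Submodule.span_le, Set.range_comp]
    exact fun _ ⟨x, _, hx⟩ ↦ hx ▸ x.2
  · rw [finrank_span_eq_card (hv.map' N.subtype N.ker_subtype), Fintype.card_fin]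

theorem Submodule.finrank_map_add_finrank_inf_ker (C : Submodule K V) [FiniteDimensional K C]
    (f : V →ₗ[K] W) :
    Module.finrank K (C.map f) + Module.finrank K ↥(C ⊓ LinearMap.ker f) =
      Module.finrank K C := by
  rw [← LinearMap.finrank_range_add_finrank_ker (f.domRestrict C), LinearMap.range_domRestrict,
    LinearMap.ker_domRestrict, ← Submodule.finrank_map_subtype_eq, Submodule.map_comap_subtype]

theorem Submodule.exists_le_inf_ker_finrank_eq (C : Submodule K V) [FiniteDimensional K C]
    (f : V →ₗ[K] W) {i : ℕ} (hi : i + Module.finrank K (C.map f) ≤ Module.finrank K C) :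
    ∃ D ≤ C ⊓ LinearMap.ker f, Module.finrank K D = i :=
  Submodule.exists_le_finrank_eq (by
    have := C.finrank_map_add_finrank_inf_ker f
    omega)

end RankNullity

theorem support_subset_compl_of_le_ker_funLeft {R ι : Type*} [Semiring R] {s : Set ι}
    {D : Submodule R (ι → R)}
    (hD : D ≤ LinearMap.ker (LinearMap.funLeft R R (Subtype.val : s → ι))) :
    {j : ι | ∃ c ∈ D, c j ≠ 0} ⊆ sᶜ := by
  rintro j ⟨c, hc, hcj⟩ hj
  exact hcj (congrFun (hD hc) ⟨j, hj⟩)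

theorem ncard_support_le_of_le_ker_funLeft {R ι : Type*} [Semiring R] [Fintype ι] [DecidableEq ι]
    {U : Finset ι} {D : Submodule R (ι → R)}
    (hD : D ≤ LinearMap.ker (LinearMap.funLeft R R (Subtype.val : ↥U → ι))) :
    Set.ncard {j : ι | ∃ c ∈ D, c j ≠ 0} ≤ Fintype.card ι - U.card := by
  calc Set.ncard {j : ι | ∃ c ∈ D, c j ≠ 0}
      ≤ Set.ncard (↑Uᶜ : Set ι) :=
        Set.ncard_le_ncard (by simpa using support_subset_compl_of_le_ker_funLeft hD)
    _ = Fintype.card ι - U.card := by rw [Set.ncard_coe_finset, Finset.card_compl]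

theorem stmt_10_general (n k : ℕ) (F : Type) [Field F]
    (C : Submodule F (Fin n → F)) (hdim : Module.finrank F C = k)
    (d : ℕ → ℕ)
    (hd : ∀ i, 1 ≤ i → i ≤ k →
      IsLeast {w | ∃ D : Submodule F (Fin n → F), D ≤ C ∧ Module.finrank F D = i ∧
        Set.ncard {j : Fin n | ∃ c ∈ D, c j ≠ 0} = w} (d i)) :
    ∀ i, 1 ≤ i → i ≤ k → ∀ U : Finset (Fin n), n - d i + 1 ≤ U.card →
      k - (i - 1) ≤
        Module.finrank F (C.map (LinearMap.funLeft F F (Subtype.val : ↥U → Fin n))) := by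
  intro i hi1 hik U hU
  by_contra! hρ
  obtain ⟨D, hDC, hDi⟩ := C.exists_le_inf_ker_finrank_eq
    (LinearMap.funLeft F F (Subtype.val : ↥U → Fin n)) (i := i) (by omega)
  have hdD : d i ≤ Set.ncard {j : Fin n | ∃ c ∈ D, c j ≠ 0} :=
    (hd i hi1 hik).2 ⟨D, hDC.trans inf_le_left, hDi, rfl⟩
  have hsupp := ncard_support_le_of_le_ker_funLeft (hDC.trans inf_le_right)
  have hUn : U.card ≤ n := by simpa using U.card_le_univ
  rw [Fintype.card_fin] at hsupp
  omega

/-- for an [n,k] linear code `C` with generalized Hamming weights `d_i`, any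
`1 ≤ i ≤ k`, and any `U ⊆ [n]` with `|U| ≥ n - d_i + 1`, one has `ρ(U) ≥ k - (i-1)`,
where `ρ(U)` is the dimension of the projection of `C` onto the coordinates in `U`
(equivalently, the rank of the corresponding columns of a generator matrix). -/
theorem stmt_10 (n k : ℕ) (F : Type) [Field F] [Fintype F] [DecidableEq F]
    (C : Submodule F (Fin n → F)) (hdim : Module.finrank F C = k)
    (d : ℕ → ℕ)
    (hd : ∀ i, 1 ≤ i → i ≤ k →
      IsLeast {w | ∃ D : Submodule F (Fin n → F), D ≤ C ∧ Module.finrank F D = i ∧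
        Set.ncard {j : Fin n | ∃ c ∈ D, c j ≠ 0} = w} (d i)) :
    ∀ i, 1 ≤ i → i ≤ k → ∀ U : Finset (Fin n), n - d i + 1 ≤ U.card →
      k - (i - 1) ≤
        Module.finrank F (C.map (LinearMap.funLeft F F (Subtype.val : ↥U → Fin n))) :=
  stmt_10_general n k F C hdim d hd
end

section
/- Let C be an [n,k] linear code over a finite field F_q with 1 ≤ k ≤ n-1, with generalized Hamming weights d_1, ..., d_k, and let C^⊥ be its dual code with generalized Hamming weights d_1^⊥, ..., d_{n-k}^⊥. Then {d_i : 1 ≤ i ≤ k} = {1,...,n} \ {n + 1 - d_j^⊥ : 1 ≤ j ≤ n-k}. -/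
/-!
For a code `W` of length `n` let `g_W(m)` be the largest dimension of a subcode of `W` supported
on `m` coordinates. Then `d_r(W) ≤ m ↔ r ≤ g_W(m)`, so the weights of `W` are exactly the
points where `g_W` increases, and it increases by at most one at each step. Since
`(C + E_A)^⊥ = C^⊥ ∩ E_{Aᶜ}` for the coordinate space `E_A`, one gets
`g_C(m) + n = k + m + g_{C^⊥}(n - m)`; hence `g_C` increases at `m` exactly when `g_{C^⊥}`
does not increase at `n + 1 - m`.
-/

open Module Finset

lemma Submodule.exists_le_finrank_eq_s11 {K V : Type*} [DivisionRing K] [AddCommGroup V] [Module K V]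
    (U : Submodule K V) {r : ℕ} (hr : r ≤ finrank K U) : ∃ D ≤ U, finrank K D = r := by
  obtain ⟨f, hf⟩ := exists_linearIndependent_of_le_finrank hr
  refine ⟨Submodule.span K (Set.range (U.subtype ∘ f)), ?_, ?_⟩
  · rw [Submodule.span_le]
    rintro _ ⟨i, rfl⟩
    exact (f i).2
  · rw [finrank_span_eq_card (hf.map' U.subtype U.ker_subtype), Fintype.card_fin]

namespace LinearCode

variable {F ι : Type*} [Field F] [Fintype ι]

def support (D : Submodule F (ι → F)) : Set ι := {j | ∃ c ∈ D, c j ≠ 0}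

def supportCards (W : Submodule F (ι → F)) (r : ℕ) : Set ℕ :=
  {w | ∃ D ≤ W, finrank F D = r ∧ (support D).ncard = w}

lemma le_card_of_isLeast_supportCards {W : Submodule F (ι → F)} {r w : ℕ}
    (hw : IsLeast (supportCards W r) w) :
    w ≤ Fintype.card ι := by
  obtain ⟨D, -, -, rfl⟩ := hw.1
  simpa using Set.ncard_le_card (support D)

variable [DecidableEq ι]

def supportedOn (F : Type*) [Field F] (A : Finset ι) : Submodule F (ι → F) :=
  ⨅ i ∈ (↑Aᶜ : Set ι), LinearMap.ker (LinearMap.proj i)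

lemma mem_supportedOn {A : Finset ι} {x : ι → F} :
    x ∈ supportedOn F A ↔ ∀ i ∉ A, x i = 0 := by
  simp [supportedOn, Submodule.mem_iInf]

lemma supportedOn_mono {A B : Finset ι} (h : A ⊆ B) : supportedOn F A ≤ supportedOn F B :=
  fun _ hx => mem_supportedOn.2 fun i hi => mem_supportedOn.1 hx i fun hiA => hi (h hiA)

lemma le_supportedOn_iff {D : Submodule F (ι → F)} {A : Finset ι} :
    D ≤ supportedOn F A ↔ support D ⊆ A := by
  simp only [SetLike.le_def, mem_supportedOn, support, Set.subset_def, Set.mem_ofPred_eq,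
    mem_coe]
  exact ⟨fun h j ⟨c, hc, hcj⟩ => by_contra fun hj => hcj (h hc j hj),
    fun h c hc j hj => by_contra fun hcj => hj (h j ⟨c, hc, hcj⟩)⟩

lemma finrank_supportedOn (A : Finset ι) : finrank F (supportedOn F A) = #A := by
  have hd : Disjoint (↑A : Set ι) ↑Aᶜ := by rw [coe_compl]; exact disjoint_compl_right
  have hu : Set.univ ⊆ (↑A : Set ι) ∪ ↑Aᶜ := by rw [coe_compl, Set.union_compl_self]
  unfold supportedOn
  rw [(LinearMap.iInfKerProjEquiv F (fun _ => F) hd hu).finrank_eq]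
  simp

def dual (C : Submodule F (ι → F)) : Submodule F (ι → F) :=
  C.dualAnnihilator.comap (dotProductEquiv F ι).toLinearMap

lemma mem_dual {C : Submodule F (ι → F)} {x : ι → F} :
    x ∈ dual C ↔ ∀ c ∈ C, x ⬝ᵥ c = 0 := by
  simp [dual, Submodule.mem_dualAnnihilator]

lemma finrank_add_finrank_dual (C : Submodule F (ι → F)) :
    finrank F C + finrank F (dual C) = Fintype.card ι := by
  rw [dual, Submodule.comap_equiv_eq_map_symm, LinearEquiv.finrank_map_eq,
    Subspace.finrank_add_finrank_dualAnnihilator_eq, finrank_fintype_fun_eq_card]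

lemma dual_sup (C D : Submodule F (ι → F)) : dual (C ⊔ D) = dual C ⊓ dual D := by
  rw [dual, Submodule.dualAnnihilator_sup_eq, Submodule.comap_inf, dual, dual]

lemma dual_supportedOn (A : Finset ι) : dual (supportedOn F A) = supportedOn F Aᶜ := by
  ext x
  simp only [mem_dual, mem_supportedOn, mem_compl, not_not]
  refine ⟨fun h i hi => ?_, fun h c hc => sum_eq_zero fun i _ => ?_⟩
  · simpa using h (Pi.single i 1) fun j hj => Pi.single_eq_of_ne (by rintro rfl; exact hj hi) 1
  · by_cases hi : i ∈ A
    · rw [h i hi, zero_mul]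
    · rw [hc i hi, mul_zero]

lemma finrank_inf_supportedOn_add_card (C : Submodule F (ι → F)) (A : Finset ι) :
    finrank F (C ⊓ supportedOn F A : Submodule F (ι → F)) + Fintype.card ι
      = finrank F C + #A + finrank F (dual C ⊓ supportedOn F Aᶜ : Submodule F (ι → F)) := by
  have h := finrank_add_finrank_dual (C ⊔ supportedOn F A)
  rw [dual_sup, dual_supportedOn] at h
  have := Submodule.finrank_sup_add_finrank_inf_eq C (supportedOn F A)
  rw [finrank_supportedOn] at this
  omega

-- This is `0` for `m > card ι`, where there are no `m`-subsets.
noncomputable def maxFinrankSupported (W : Submodule F (ι → F)) (m : ℕ) : ℕ :=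
  (univ.powersetCard m).sup fun A => finrank F ↥(W ⊓ supportedOn F A)

variable (W : Submodule F (ι → F))

lemma finrank_inf_supportedOn_le {A : Finset ι} {m : ℕ} (hA : #A = m) :
    finrank F ↥(W ⊓ supportedOn F A) ≤ maxFinrankSupported W m :=
  le_sup (f := fun A => finrank F ↥(W ⊓ supportedOn F A)) (mem_powersetCard_univ.2 hA)

lemma exists_maxFinrankSupported_eq {m : ℕ} (hm : m ≤ Fintype.card ι) :
    ∃ A : Finset ι, #A = m ∧
      maxFinrankSupported W m = finrank F ↥(W ⊓ supportedOn F A) := by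
  obtain ⟨A, hA, hmax⟩ := exists_mem_eq_sup (univ.powersetCard m)
    (powersetCard_nonempty.2 (by rwa [card_univ])) fun A => finrank F ↥(W ⊓ supportedOn F A)
  exact ⟨A, mem_powersetCard_univ.1 hA, hmax⟩

lemma maxFinrankSupported_le_finrank (m : ℕ) : maxFinrankSupported W m ≤ finrank F W :=
  Finset.sup_le fun _ _ => Submodule.finrank_mono inf_le_left

lemma maxFinrankSupported_mono {m m' : ℕ} (h : m ≤ m') (h' : m' ≤ Fintype.card ι) :
    maxFinrankSupported W m ≤ maxFinrankSupported W m' := by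
  refine Finset.sup_le fun A hA => ?_
  obtain ⟨B, hAB, hB⟩ := exists_superset_card_eq ((mem_powersetCard_univ.1 hA).trans_le h) h'
  exact (Submodule.finrank_mono (inf_le_inf_left W (supportedOn_mono hAB))).trans
    (finrank_inf_supportedOn_le W hB)

lemma maxFinrankSupported_succ_le (m : ℕ) :
    maxFinrankSupported W (m + 1) ≤ maxFinrankSupported W m + 1 := by
  refine Finset.sup_le fun A hA => ?_
  rw [mem_powersetCard_univ] at hA
  obtain ⟨j, hj⟩ : A.Nonempty := card_pos.1 (by omega)
  set U := W ⊓ supportedOn F A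
  have hinf : U ⊓ supportedOn F (A.erase j) = W ⊓ supportedOn F (A.erase j) := by
    rw [inf_assoc, inf_eq_right.2 (supportedOn_mono (erase_subset j A))]
  have hsup : finrank F ↥(U ⊔ supportedOn F (A.erase j)) ≤ #A :=
    (Submodule.finrank_mono (sup_le inf_le_right (supportedOn_mono (erase_subset j A)))).trans_eq
      (finrank_supportedOn A)
  have hdim := Submodule.finrank_sup_add_finrank_inf_eq U (supportedOn F (A.erase j))
  rw [hinf, finrank_supportedOn, card_erase_of_mem hj] at hdim
  have hle := finrank_inf_supportedOn_le W (A := A.erase j) (m := m)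
    (by rw [card_erase_of_mem hj]; omega)
  omega

lemma maxFinrankSupported_zero : maxFinrankSupported W 0 = 0 :=
  Nat.le_zero.1 <| Finset.sup_le fun A hA =>
    (Submodule.finrank_mono inf_le_right).trans_eq
      ((finrank_supportedOn A).trans (mem_powersetCard_univ.1 hA))

lemma maxFinrankSupported_add_card (C : Submodule F (ι → F)) {m : ℕ}
    (hm : m ≤ Fintype.card ι) :
    maxFinrankSupported C m + Fintype.card ι
      = finrank F C + m + maxFinrankSupported (dual C) (Fintype.card ι - m) := by
  apply le_antisymm
  · obtain ⟨A, hA, hmax⟩ := exists_maxFinrankSupported_eq C hm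
    have := finrank_inf_supportedOn_le (dual C) (A := Aᶜ) (by rw [card_compl, hA])
    have := finrank_inf_supportedOn_add_card C A
    omega
  · obtain ⟨B, hB, hmax⟩ := exists_maxFinrankSupported_eq (dual C) (Nat.sub_le _ m)
    have := finrank_inf_supportedOn_le C (A := Bᶜ) (m := m) (by rw [card_compl, hB]; omega)
    have := finrank_inf_supportedOn_add_card C Bᶜ
    rw [compl_compl, card_compl, hB] at this
    omega

lemma maxFinrankSupported_lt_iff_dual (C : Submodule F (ι → F)) {m : ℕ} (hm1 : 1 ≤ m)
    (hmn : m ≤ Fintype.card ι) :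
    maxFinrankSupported C (m - 1) < maxFinrankSupported C m ↔
      ¬ maxFinrankSupported (dual C) (Fintype.card ι - m)
        < maxFinrankSupported (dual C) (Fintype.card ι + 1 - m) := by
  -- By `maxFinrankSupported_add_card` the two increments, each `0` or `1`, add up to `1`.
  have h := maxFinrankSupported_add_card C hmn
  have h' := maxFinrankSupported_add_card C (m := m - 1) (by omega)
  have hstep := maxFinrankSupported_succ_le C (m - 1)
  have hstep' := maxFinrankSupported_succ_le (dual C) (Fintype.card ι - m)
  have hmono := maxFinrankSupported_mono C (Nat.sub_le m 1) hmn
  have hmono' := maxFinrankSupported_mono (dual C) (Nat.sub_le_sub_left hm1 _) (Nat.sub_le _ _)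
  rw [Nat.sub_add_cancel hm1] at hstep
  rw [show Fintype.card ι - m + 1 = Fintype.card ι - (m - 1) by omega] at hstep'
  rw [show Fintype.card ι + 1 - m = Fintype.card ι - (m - 1) by omega]
  omega

lemma le_iff_le_maxFinrankSupported {r w : ℕ} (hw : IsLeast (supportCards W r) w) {m : ℕ}
    (hm : m ≤ Fintype.card ι) : w ≤ m ↔ r ≤ maxFinrankSupported W m := by
  constructor
  · obtain ⟨D, hDW, rfl, rfl⟩ := hw.1
    intro hDm
    set A := (Set.toFinite (support D)).toFinset
    have hDA : D ≤ W ⊓ supportedOn F A := le_inf hDW (le_supportedOn_iff.2 (by simp [A]))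
    have hA : #A = (support D).ncard := (Set.ncard_eq_toFinset_card _ _).symm
    calc finrank F D ≤ finrank F ↥(W ⊓ supportedOn F A) := Submodule.finrank_mono hDA
      _ ≤ maxFinrankSupported W (support D).ncard := finrank_inf_supportedOn_le W hA
      _ ≤ maxFinrankSupported W m := maxFinrankSupported_mono W hDm hm
  · intro hrm
    obtain ⟨A, hA, hmax⟩ := exists_maxFinrankSupported_eq W hm
    obtain ⟨D, hDA, hD⟩ := (W ⊓ supportedOn F A).exists_le_finrank_eq_s11 (hmax ▸ hrm)
    calc w ≤ (support D).ncard := hw.2 ⟨D, hDA.trans inf_le_left, hD, rfl⟩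
      _ ≤ (A : Set ι).ncard := Set.ncard_le_ncard (le_supportedOn_iff.1 (hDA.trans inf_le_right))
      _ = m := by rw [Set.ncard_coe_finset, hA]

variable {W} in
lemma one_le_of_isLeast_supportCards {r w : ℕ} (hw : IsLeast (supportCards W r) w)
    (hr : 1 ≤ r) :
    1 ≤ w := by
  by_contra h
  have := (le_iff_le_maxFinrankSupported W hw (Nat.zero_le _)).1 (by omega)
  rw [maxFinrankSupported_zero] at this
  omega

lemma exists_weight_eq_iff_maxFinrankSupported_lt {d : ℕ → ℕ}
    (hd : ∀ r, 1 ≤ r → r ≤ finrank F W → IsLeast (supportCards W r) (d r)) {m : ℕ}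
    (hm1 : 1 ≤ m) (hmn : m ≤ Fintype.card ι) :
    (∃ r, (1 ≤ r ∧ r ≤ finrank F W) ∧ d r = m) ↔
      maxFinrankSupported W (m - 1) < maxFinrankSupported W m := by
  constructor
  · rintro ⟨r, ⟨hr1, hrk⟩, rfl⟩
    have key {m} (hm : m ≤ Fintype.card ι) := le_iff_le_maxFinrankSupported W (hd r hr1 hrk) hm
    have hle := (key hmn).1 le_rfl
    have hnle := mt (key (m := d r - 1) (by omega)).2 (by omega)
    omega
  · intro hlt
    set r := maxFinrankSupported W m
    have hr1 : 1 ≤ r := by omega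
    have key {m'} (hm' : m' ≤ Fintype.card ι) :=
      le_iff_le_maxFinrankSupported W (hd r hr1 (maxFinrankSupported_le_finrank W m)) hm'
    have hle := (key hmn).2 le_rfl
    have hnle := mt (key (m' := m - 1) (by omega)).1 (by omega)
    exact ⟨r, ⟨hr1, maxFinrankSupported_le_finrank W m⟩, by omega⟩

end LinearCode

open LinearCode in
theorem stmt_11_general (n k : ℕ)
    (F : Type) [Field F]
    (C : Submodule F (Fin n → F)) (hdim : Module.finrank F C = k)
    (Cd : Submodule F (Fin n → F))
    (hCd : ∀ x, x ∈ Cd ↔ ∀ c ∈ C, ∑ i, x i * c i = 0)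
    (d dperp : ℕ → ℕ)
    (hd : ∀ i, 1 ≤ i → i ≤ k →
      IsLeast {w | ∃ D : Submodule F (Fin n → F), D ≤ C ∧ Module.finrank F D = i ∧
        Set.ncard {j : Fin n | ∃ c ∈ D, c j ≠ 0} = w} (d i))
    (hdperp : ∀ j, 1 ≤ j → j ≤ n - k →
      IsLeast {w | ∃ D : Submodule F (Fin n → F), D ≤ Cd ∧ Module.finrank F D = j ∧
        Set.ncard {i : Fin n | ∃ c ∈ D, c i ≠ 0} = w} (dperp j)) :
    (Finset.Icc 1 k).image d =
      Finset.Icc 1 n \ (Finset.Icc 1 (n - k)).image (fun j => n + 1 - dperp j) := by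
  obtain rfl : Cd = dual C := by ext x; exact (hCd x).trans mem_dual.symm
  subst hdim
  have hn := Fintype.card_fin n
  have hdual := finrank_add_finrank_dual C
  rw [show n - finrank F C = finrank F (dual C) by omega] at hdperp ⊢
  ext m
  simp only [mem_image, mem_sdiff, mem_Icc]
  by_cases hm : 1 ≤ m ∧ m ≤ n
  · have hreflect : (∃ j, (1 ≤ j ∧ j ≤ finrank F (dual C)) ∧ n + 1 - dperp j = m) ↔
        ∃ j, (1 ≤ j ∧ j ≤ finrank F (dual C)) ∧ dperp j = n + 1 - m :=
      exists_congr fun j => and_congr_right fun ⟨hj1, hjk⟩ => by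
        have := le_card_of_isLeast_supportCards (hdperp j hj1 hjk)
        omega
    rw [hreflect, exists_weight_eq_iff_maxFinrankSupported_lt C hd hm.1 (by omega),
      exists_weight_eq_iff_maxFinrankSupported_lt (dual C) hdperp (by omega) (by omega),
      maxFinrankSupported_lt_iff_dual C hm.1 (by omega)]
    simp only [hn, show n + 1 - m - 1 = n - m by omega, hm, true_and]
  · simp only [hm, false_and, iff_false, not_exists, not_and]
    rintro r ⟨hr1, hrk⟩ rfl
    have := le_card_of_isLeast_supportCards (hd r hr1 hrk)
    have := one_le_of_isLeast_supportCards (hd r hr1 hrk) hr1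
    omega

/-- Wei duality: for an [n,k] linear code `C` (`1 ≤ k ≤ n-1`) with generalized
Hamming weights `d_1, …, d_k` and dual code `C^⊥` with generalized Hamming weights
`d_1^⊥, …, d_{n-k}^⊥`, one has
`{d_i : 1 ≤ i ≤ k} = {1,…,n} \ {n + 1 - d_j^⊥ : 1 ≤ j ≤ n-k}`. -/
theorem stmt_11 (n k : ℕ) (hk : 1 ≤ k) (hkn : k ≤ n - 1)
    (F : Type) [Field F] [Fintype F] [DecidableEq F]
    (C : Submodule F (Fin n → F)) (hdim : Module.finrank F C = k)
    (Cd : Submodule F (Fin n → F))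
    (hCd : ∀ x, x ∈ Cd ↔ ∀ c ∈ C, ∑ i, x i * c i = 0)
    (d dperp : ℕ → ℕ)
    (hd : ∀ i, 1 ≤ i → i ≤ k →
      IsLeast {w | ∃ D : Submodule F (Fin n → F), D ≤ C ∧ Module.finrank F D = i ∧
        Set.ncard {j : Fin n | ∃ c ∈ D, c j ≠ 0} = w} (d i))
    (hdperp : ∀ j, 1 ≤ j → j ≤ n - k →
      IsLeast {w | ∃ D : Submodule F (Fin n → F), D ≤ Cd ∧ Module.finrank F D = j ∧
        Set.ncard {i : Fin n | ∃ c ∈ D, c i ≠ 0} = w} (dperp j)) :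
    (Finset.Icc 1 k).image d =
      Finset.Icc 1 n \ (Finset.Icc 1 (n - k)).image (fun j => n + 1 - dperp j) :=
  stmt_11_general n k F C hdim Cd hCd d dperp hd hdperp
end

section
/- For any [n,k] linear code C over a finite field F_q with q elements and any 1 ≤ s ≤ k, the s-th higher support weight enumerator polynomial satisfies W_C^{(s)}(Z) = sum over all subsets U of {1,...,n} of Z^{n-|U|} (1-Z)^{|U|} · [k - ρ(U) choose s]_q, as an identity of polynomials in the variable Z with rational coefficients. Moreover, since [k - ρ(U) choose s]_q = 0 whenever |U| ≥ n - d_s + 1, the sum may be restricted to subsets U with |U| ≤ n - d_s, where d_s is the s-th generalized Hamming weight of C. -/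
/-! For `U ⊆ [n]`, the `s`-dimensional subcodes `D ≤ C` whose support misses `U` are the
`s`-dimensional subspaces of `C ∩ ker π_U`, where `π_U` restricts codewords to `U`; by rank–nullity
this space has dimension `k - ρ(U)`, so there are `[k - ρ(U) choose s]_q` of them. Exchanging the
two sums, each `D` collects `∑_{U ⊆ [n] \ Supp D} Z^(n-|U|) (1-Z)^|U| = Z^wt(D)` by the binomial
theorem. If some such `D` exists, then `d_s ≤ wt(D) ≤ n - |U|`, which gives the vanishing. -/

open Polynomial Finset

/-- The Gaussian binomial coefficient `[t choose s]_q = ∏_{i=0}^{s-1} (q^t - q^i)/(q^s - q^i)`,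
taken to be `0` when `t < s`. -/
def gbinom (q t s : ℕ) : ℚ :=
  if s ≤ t then
    (∏ i ∈ Finset.range s, ((q : ℚ) ^ t - (q : ℚ) ^ i)) /
      (∏ i ∈ Finset.range s, ((q : ℚ) ^ s - (q : ℚ) ^ i))
  else 0

open Module

lemma cast_prod_range_pow_sub {q t s : ℕ} (hq : 0 < q) (hst : s ≤ t) :
    ((∏ i ∈ range s, (q ^ t - q ^ i) : ℕ) : ℚ) = ∏ i ∈ range s, ((q : ℚ) ^ t - (q : ℚ) ^ i) := by
  push_cast
  refine prod_congr rfl fun i hi => ?_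
  rw [Nat.cast_sub (Nat.pow_le_pow_right hq ((mem_range.1 hi).le.trans hst))]
  push_cast
  rfl

section Grassmannian

variable {F V : Type*} [Field F] [Fintype F] [AddCommGroup V] [Module F V] [Finite V]

def linearIndependentSpanEquiv {s : ℕ} (D : Submodule F V) (hD : finrank F D = s) :
    {v : {v : Fin s → V // LinearIndependent F v} // Submodule.span F (Set.range v.1) = D} ≃
      {w : Fin s → D // LinearIndependent F w} where
  toFun v := ⟨fun i => ⟨v.1.1 i, (le_of_eq v.2) (Submodule.subset_span ⟨i, rfl⟩)⟩,
    v.1.2.of_comp D.subtype⟩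
  invFun w :=
    have hw : LinearIndependent F (D.subtype ∘ w.1) := w.2.map' D.subtype D.ker_subtype
    ⟨⟨_, hw⟩, Submodule.eq_of_le_of_finrank_le
      (Submodule.span_le.2 <| Set.range_subset_iff.2 fun i => (w.1 i).2)
      (by rw [hD, finrank_span_eq_card hw, Fintype.card_fin])⟩
  left_inv _ := rfl
  right_inv _ := rfl

lemma card_linearIndependent_eq_card_mul (s : ℕ) :
    Nat.card {v : Fin s → V // LinearIndependent F v} =
      Nat.card {D : Submodule F V // finrank F D = s} *
        ∏ i ∈ range s, (Fintype.card F ^ s - Fintype.card F ^ i) := by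
  let span : {v : Fin s → V // LinearIndependent F v} → {D : Submodule F V // finrank F D = s} :=
    fun v => ⟨Submodule.span F (Set.range v.1), by rw [finrank_span_eq_card v.2, Fintype.card_fin]⟩
  have fiber (D) : Nat.card {v // span v = D} =
      ∏ i ∈ range s, (Fintype.card F ^ s - Fintype.card F ^ i) := by
    rw [Nat.card_congr ((Equiv.subtypeEquivRight fun _ => Subtype.ext_iff).trans
      (linearIndependentSpanEquiv D.1 D.2)), card_linearIndependent D.2.ge, D.2,
      Fin.prod_univ_eq_prod_range (fun i => Fintype.card F ^ s - Fintype.card F ^ i)]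
  have := Fintype.ofFinite {D : Submodule F V // finrank F D = s}
  rw [← Nat.card_congr (Equiv.sigmaFiberEquiv span), Nat.card_sigma, Fintype.sum_congr _ _ fiber,
    Finset.sum_const, Finset.card_univ, ← Nat.card_eq_fintype_card, smul_eq_mul]

theorem card_submodule_finrank_eq (s : ℕ) :
    (Nat.card {D : Submodule F V // finrank F D = s} : ℚ) =
      gbinom (Fintype.card F) (finrank F V) s := by
  have hq : 0 < Fintype.card F := Fintype.card_pos
  by_cases hst : s ≤ finrank F V
  · have hden : ∏ i ∈ range s, ((Fintype.card F : ℚ) ^ s - (Fintype.card F : ℚ) ^ i) ≠ 0 :=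
      prod_ne_zero_iff.2 fun i hi => sub_ne_zero.2 <| by
        exact_mod_cast (Nat.pow_lt_pow_right Fintype.one_lt_card (mem_range.1 hi)).ne'
    rw [gbinom, if_pos hst, eq_div_iff hden, ← cast_prod_range_pow_sub hq le_rfl,
      ← cast_prod_range_pow_sub hq hst, ← Nat.cast_mul, ← card_linearIndependent_eq_card_mul,
      card_linearIndependent hst, Fin.prod_univ_eq_prod_range
        (fun i => Fintype.card F ^ finrank F V - Fintype.card F ^ i)]
  · have : IsEmpty {D : Submodule F V // finrank F D = s} :=
      ⟨fun D => hst (D.2 ▸ Submodule.finrank_le D.1)⟩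
    rw [Nat.card_of_isEmpty, gbinom, if_neg hst, Nat.cast_zero]

theorem card_submodule_le_finrank_eq (W : Submodule F V) (s : ℕ) :
    (Nat.card {D : Submodule F V // D ≤ W ∧ finrank F D = s} : ℚ) =
      gbinom (Fintype.card F) (finrank F W) s := by
  rw [← card_submodule_finrank_eq, Nat.card_congr
    (((Submodule.MapSubtype.orderIso W).toEquiv.subtypeEquiv fun D => by
      rw [← Submodule.finrank_map_subtype_eq W D]; rfl).trans
      (Equiv.subtypeSubtypeEquivSubtypeInter (· ≤ W) (fun D => finrank F D = s)))]

end Grassmannian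

section SubsetSums

variable {ι α R : Type*} [CommRing R]

lemma sum_powerset_pow_mul_one_sub_pow (x : R) (T : Finset ι) {n : ℕ} (hT : #T ≤ n) :
    ∑ U ∈ T.powerset, x ^ (n - #U) * (1 - x) ^ #U = x ^ (n - #T) := by
  calc ∑ U ∈ T.powerset, x ^ (n - #U) * (1 - x) ^ #U
      = x ^ (n - #T) * ∑ U ∈ T.powerset, (1 - x) ^ #U * x ^ (#T - #U) := by
        rw [mul_sum]
        refine sum_congr rfl fun U hU => ?_
        have hUT : #U ≤ #T := card_le_card (mem_powerset.1 hU)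
        rw [show n - #U = (n - #T) + (#T - #U) by omega, pow_add]
        ring
    _ = x ^ (n - #T) := by rw [sum_pow_mul_eq_add_pow, sub_add_cancel, one_pow, mul_one]

theorem sum_pow_mul_one_sub_pow_mul_card_disjoint [Fintype ι] [DecidableEq ι] (G : Finset α)
    (S : α → Finset ι) (x : R) :
    ∑ U : Finset ι, x ^ (Fintype.card ι - #U) * (1 - x) ^ #U * #{a ∈ G | Disjoint U (S a)} =
      ∑ a ∈ G, x ^ #(S a) := by
  calc _ = ∑ a ∈ G, ∑ U ∈ (S a)ᶜ.powerset, x ^ (Fintype.card ι - #U) * (1 - x) ^ #U := by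
        simp_rw [card_filter, Nat.cast_sum, mul_sum, Nat.cast_ite, Nat.cast_one, Nat.cast_zero,
          mul_boole]
        rw [sum_comm]
        refine sum_congr rfl fun a _ => ?_
        rw [← sum_filter]
        congr 1
        ext U
        simp [subset_compl_iff_disjoint_right]
    _ = ∑ a ∈ G, x ^ #(S a) := by
        refine sum_congr rfl fun a _ => ?_
        rw [sum_powerset_pow_mul_one_sub_pow x _ (card_le_univ _), card_compl,
          Nat.sub_sub_self (card_le_univ _)]

lemma sum_card_filter_eq_mul_pow (G : Finset α) (f : α → ℕ) {n : ℕ} (hf : ∀ a ∈ G, f a ≤ n)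
    (x : R) : ∑ w ∈ range (n + 1), (#{a ∈ G | f a = w} : R) * x ^ w = ∑ a ∈ G, x ^ f a := by
  rw [← sum_fiberwise_of_maps_to fun a ha => mem_range_succ_iff.2 (hf a ha)]
  refine sum_congr rfl fun w _ => ?_
  rw [sum_congr rfl fun a ha => by rw [(mem_filter.1 ha).2], sum_const, nsmul_eq_mul]

end SubsetSums

section LinearCode

variable {ι F : Type*} [Fintype ι] [Field F]

open Classical in
noncomputable def codeSupport (D : Submodule F (ι → F)) : Finset ι := {j | ∃ c ∈ D, c j ≠ 0}

lemma card_codeSupport (D : Submodule F (ι → F)) :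
    #(codeSupport D) = {j | ∃ c ∈ D, c j ≠ 0}.ncard := by
  rw [← Set.ncard_coe_finset, codeSupport, coe_filter_univ]

lemma disjoint_codeSupport_iff {U : Finset ι} {D : Submodule F (ι → F)} :
    Disjoint U (codeSupport D) ↔
      D ≤ LinearMap.ker (LinearMap.funLeft F F (Subtype.val : U → ι)) := by
  classical
  constructor
  · intro h c hc
    ext ⟨j, hj⟩
    by_contra hne
    exact disjoint_left.1 h hj (mem_filter.2 ⟨mem_univ j, c, hc, hne⟩)
  · refine fun h => disjoint_left.2 fun j hj hjD => ?_
    obtain ⟨c, hc, hne⟩ := (mem_filter.1 hjD).2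
    exact hne (congrFun (LinearMap.mem_ker.1 (h hc)) ⟨j, hj⟩)

lemma finrank_inf_ker_add_finrank_map {V W : Type*} [AddCommGroup V] [Module F V]
    [AddCommGroup W] [Module F W] (C : Submodule F V) [FiniteDimensional F C] (f : V →ₗ[F] W) :
    finrank F ↥(C ⊓ LinearMap.ker f) + finrank F (C.map f) = finrank F C := by
  rw [← (Submodule.comapSubtypeEquivOfLe (inf_le_left : C ⊓ LinearMap.ker f ≤ C)).finrank_eq,
    Submodule.comap_inf, Submodule.comap_subtype_self, top_inf_eq, add_comm,
    ← LinearMap.ker_domRestrict, ← LinearMap.range_domRestrict,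
    LinearMap.finrank_range_add_finrank_ker]

theorem card_submodule_disjoint_codeSupport [Fintype F] (C : Submodule F (ι → F)) (U : Finset ι)
    (s : ℕ) :
    (Nat.card {D : Submodule F (ι → F) // D ≤ C ∧ finrank F D = s ∧ Disjoint U (codeSupport D)} :
      ℚ) = gbinom (Fintype.card F)
        (finrank F C - finrank F (C.map (LinearMap.funLeft F F (Subtype.val : U → ι)))) s := by
  rw [← finrank_inf_ker_add_finrank_map C (LinearMap.funLeft F F (Subtype.val : U → ι)),
    Nat.add_sub_cancel, ← card_submodule_le_finrank_eq]
  exact congrArg _ <| Nat.card_congr <| Equiv.subtypeEquivRight fun D => by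
    rw [le_inf_iff, ← disjoint_codeSupport_iff]
    tauto

end LinearCode

theorem stmt_14_general (n k q s : ℕ) (F : Type) [Field F] [Fintype F]
    (hq : q = Fintype.card F)
    (C : Submodule F (Fin n → F)) (hdim : Module.finrank F C = k)
    (ρ : Finset (Fin n) → ℕ)
    (hρ : ∀ U : Finset (Fin n),
      ρ U = Module.finrank F (C.map (LinearMap.funLeft F F (Subtype.val : ↥U → Fin n))))
    (As : ℕ → ℕ)
    (hAs : ∀ w, As w = Nat.card {D : Submodule F (Fin n → F) //
      D ≤ C ∧ Module.finrank F D = s ∧ Set.ncard {j : Fin n | ∃ c ∈ D, c j ≠ 0} = w})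
    (ds : ℕ)
    (hds : IsLeast {w | ∃ D : Submodule F (Fin n → F), D ≤ C ∧ Module.finrank F D = s ∧
      Set.ncard {j : Fin n | ∃ c ∈ D, c j ≠ 0} = w} ds) :
    (∑ w ∈ Finset.range (n + 1), (As w : ℚ[X]) * X ^ w =
      ∑ U : Finset (Fin n),
        X ^ (n - U.card) * (1 - X) ^ U.card * Polynomial.C (gbinom q (k - ρ U) s)) ∧
    (∀ U : Finset (Fin n), n - ds + 1 ≤ U.card → gbinom q (k - ρ U) s = 0) ∧
    (∑ w ∈ Finset.range (n + 1), (As w : ℚ[X]) * X ^ w =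
      ∑ U ∈ Finset.univ.filter (fun U : Finset (Fin n) => U.card ≤ n - ds),
        X ^ (n - U.card) * (1 - X) ^ U.card * Polynomial.C (gbinom q (k - ρ U) s)) := by
  classical
  have := Fintype.ofFinite (Submodule F (Fin n → F))
  let G : Finset (Submodule F (Fin n → F)) := {D | D ≤ C ∧ finrank F D = s}
  have card_G_filter (p : Submodule F (Fin n → F) → Prop) [DecidablePred p] :
      Nat.card {D : Submodule F (Fin n → F) // D ≤ C ∧ finrank F D = s ∧ p D} =
        #{D ∈ G | p D} := by
    rw [Nat.card_eq_fintype_card, Fintype.card_subtype, filter_filter]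
    simp only [and_assoc]
  have hcount (U : Finset (Fin n)) :
      (#{D ∈ G | Disjoint U (codeSupport D)} : ℚ) = gbinom q (k - ρ U) s := by
    rw [← card_G_filter, card_submodule_disjoint_codeSupport, hq, hdim, hρ]
  have hvanish (U : Finset (Fin n)) (hU : n - ds + 1 ≤ #U) : gbinom q (k - ρ U) s = 0 := by
    rw [← hcount, Nat.cast_eq_zero, card_eq_zero, filter_eq_empty_iff]
    intro D hD hUD
    have hds_le : ds ≤ #(codeSupport D) :=
      hds.2 ⟨D, (mem_filter.1 hD).2.1, (mem_filter.1 hD).2.2, (card_codeSupport D).symm⟩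
    have hsupp : #(codeSupport D) ≤ n - #U := by
      simpa [card_compl] using card_le_card (subset_compl_iff_disjoint_left.2 hUD)
    have hUn : #U ≤ n := (card_le_univ U).trans_eq (Fintype.card_fin n)
    omega
  have henum : ∑ w ∈ range (n + 1), (As w : ℚ[X]) * X ^ w =
      ∑ U : Finset (Fin n), X ^ (n - #U) * (1 - X) ^ #U * Polynomial.C (gbinom q (k - ρ U) s) := by
    simp_rw [← hcount, map_natCast, hAs, ← card_codeSupport, card_G_filter]
    rw [sum_card_filter_eq_mul_pow G _ fun D _ => (card_le_univ _).trans_eq (Fintype.card_fin n),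
      ← sum_pow_mul_one_sub_pow_mul_card_disjoint G codeSupport, Fintype.card_fin]
  refine ⟨henum, hvanish, henum.trans (sum_subset (filter_subset _ _) fun U _ hU => ?_).symm⟩
  rw [mem_filter, not_and, not_le] at hU
  rw [hvanish U (hU (mem_univ U)), map_zero, mul_zero]

/-- for any [n,k] linear code over `F_q` and `1 ≤ s ≤ k`, the `s`-th higher
support weight enumerator polynomial satisfies
`W^{(s)}_C(Z) = ∑_{U ⊆ [n]} Z^(n-|U|) (1-Z)^|U| · [k-ρ(U) choose s]_q` in `ℚ[Z]`; moreover
`[k-ρ(U) choose s]_q = 0` whenever `|U| ≥ n - d_s + 1`, so the sum may be restricted to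
subsets `U` with `|U| ≤ n - d_s`. -/
theorem stmt_14 (n k q s : ℕ) (F : Type) [Field F] [Fintype F] [DecidableEq F]
    (hq : q = Fintype.card F) (hs1 : 1 ≤ s) (hsk : s ≤ k)
    (C : Submodule F (Fin n → F)) (hdim : Module.finrank F C = k)
    (ρ : Finset (Fin n) → ℕ)
    (hρ : ∀ U : Finset (Fin n),
      ρ U = Module.finrank F (C.map (LinearMap.funLeft F F (Subtype.val : ↥U → Fin n))))
    (As : ℕ → ℕ)
    (hAs : ∀ w, As w = Nat.card {D : Submodule F (Fin n → F) //
      D ≤ C ∧ Module.finrank F D = s ∧ Set.ncard {j : Fin n | ∃ c ∈ D, c j ≠ 0} = w})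
    (ds : ℕ)
    (hds : IsLeast {w | ∃ D : Submodule F (Fin n → F), D ≤ C ∧ Module.finrank F D = s ∧
      Set.ncard {j : Fin n | ∃ c ∈ D, c j ≠ 0} = w} ds) :
    (∑ w ∈ Finset.range (n + 1), (As w : ℚ[X]) * X ^ w =
      ∑ U : Finset (Fin n),
        X ^ (n - U.card) * (1 - X) ^ U.card * Polynomial.C (gbinom q (k - ρ U) s)) ∧
    (∀ U : Finset (Fin n), n - ds + 1 ≤ U.card → gbinom q (k - ρ U) s = 0) ∧
    (∑ w ∈ Finset.range (n + 1), (As w : ℚ[X]) * X ^ w =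
      ∑ U ∈ Finset.univ.filter (fun U : Finset (Fin n) => U.card ≤ n - ds),
        X ^ (n - U.card) * (1 - X) ^ U.card * Polynomial.C (gbinom q (k - ρ U) s)) :=
  stmt_14_general n k q s F hq C hdim ρ hρ As hAs ds hds
end
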